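/- arXiv:1805.03405 — 8 statements merged into one kernel-verified Lean document; each statement's English description precedes it below -/
import Mathlib

section
/- For every finite simple graph G, the following statements are equivalent: (1) G is a threshold graph; (2) the clique hypergraph C(G) is 1-Sperner; (3) the clique hypergraph C(G) is a threshold hypergraph; (4) the clique hypergraph C(G) is 2-asummable. -/
open Finset

open scoped Classical

/-- A hypergraph (given by its set of hyperedges, each a finite set of vertices)
is 1-Sperner if every two distinct hyperedges `e` and `f` satisfy
`min |e \ f| |f \ e| = 1`. -/
def OneSperner {V : Type*} [DecidableEq V] (E : Set (Finset V)) : Prop :=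
  ∀ e ∈ E, ∀ f ∈ E, e ≠ f → min (e \ f).card (f \ e).card = 1

/-- A set of vertices `X` is dependent in the hypergraph with hyperedge set `E`
if it contains some hyperedge; it is independent otherwise. -/
def HypDep {V : Type*} (E : Set (Finset V)) (X : Finset V) : Prop :=
  ∃ e ∈ E, e ⊆ X

/-- A hypergraph is threshold if there are nonnegative integer vertex weights and a
threshold such that a vertex set has weight at least the threshold iff it contains
a hyperedge. -/
def HypThreshold {V : Type*} [Fintype V] (E : Set (Finset V)) : Prop :=
  ∃ (w : V → ℕ) (t : ℕ), ∀ X : Finset V, (t ≤ ∑ x ∈ X, w x) ↔ HypDep E X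

/-- The characteristic vector of a finite vertex set. -/
def chiVec {V : Type*} [DecidableEq V] (X : Finset V) : V → ℕ :=
  fun v => if v ∈ X then 1 else 0

/-- A hypergraph is 2-asummable if there are no two independent sets `A₁, A₂`
and two dependent sets `B₁, B₂` with `χ^{A₁} + χ^{A₂} = χ^{B₁} + χ^{B₂}`. -/
def TwoAsummable {V : Type*} [DecidableEq V] (E : Set (Finset V)) : Prop :=
  ¬ ∃ A₁ A₂ B₁ B₂ : Finset V,
      ¬ HypDep E A₁ ∧ ¬ HypDep E A₂ ∧ HypDep E B₁ ∧ HypDep E B₂ ∧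
      ∀ v, chiVec A₁ v + chiVec A₂ v = chiVec B₁ v + chiVec B₂ v

/-- A graph is threshold if there are nonnegative integer vertex weights and a threshold
such that a vertex set has weight at most the threshold iff it is an independent set. -/
def ThresholdGraph {V : Type*} [Fintype V] (G : SimpleGraph V) : Prop :=
  ∃ (w : V → ℕ) (t : ℕ), ∀ X : Finset V,
    ((∑ x ∈ X, w x) ≤ t ↔ ∀ u ∈ X, ∀ v ∈ X, ¬ G.Adj u v)

/-- A vertex cover of a graph: every edge has an endpoint in the set. -/
def IsVertexCover {V : Type*} (G : SimpleGraph V) (S : Finset V) : Prop :=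
  ∀ u v : V, G.Adj u v → u ∈ S ∨ v ∈ S

/-- The vertex cover hypergraph: hyperedges are the inclusion-minimal vertex covers. -/
def VCHyp {V : Type*} (G : SimpleGraph V) : Set (Finset V) :=
  {S | IsVertexCover G S ∧ ∀ T : Finset V, IsVertexCover G T → T ⊆ S → T = S}

/-- The clique hypergraph: hyperedges are the inclusion-maximal cliques. -/
def CliqueHyp {V : Type*} (G : SimpleGraph V) : Set (Finset V) :=
  {S | G.IsClique (S : Set V) ∧ ∀ T : Finset V, G.IsClique (T : Set V) → S ⊆ T → T = S}

/-- The closed neighborhood `N[v]` of a vertex, as a finite set. -/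
def closedNbhd {V : Type*} [Fintype V] [DecidableEq V] (G : SimpleGraph V)
    [DecidableRel G.Adj] (v : V) : Finset V :=
  insert v (G.neighborFinset v)

/-- The closed neighborhood hypergraph: hyperedges are the inclusion-minimal sets of
the form `N[v]`. -/
def NHyp {V : Type*} [Fintype V] [DecidableEq V] (G : SimpleGraph V)
    [DecidableRel G.Adj] : Set (Finset V) :=
  {S | (∃ v : V, S = closedNbhd G v) ∧
       ∀ v : V, closedNbhd G v ⊆ S → closedNbhd G v = S}

/-- A dominating set: every vertex is in the set or has a neighbor in it. -/
def IsDomSet {V : Type*} (G : SimpleGraph V) (D : Finset V) : Prop :=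
  ∀ v : V, v ∈ D ∨ ∃ u ∈ D, G.Adj u v

/-- The dominating set hypergraph: hyperedges are the inclusion-minimal dominating sets. -/
def DomHyp {V : Type*} (G : SimpleGraph V) : Set (Finset V) :=
  {D | IsDomSet G D ∧ ∀ T : Finset V, IsDomSet G T → T ⊆ D → T = D}

/-- A graph is domishold if there are nonnegative integer vertex weights and a threshold
such that a vertex set has weight at least the threshold iff it is a dominating set. -/
def Domishold {V : Type*} [Fintype V] (G : SimpleGraph V) : Prop :=
  ∃ (w : V → ℕ) (t : ℕ), ∀ X : Finset V, (t ≤ ∑ x ∈ X, w x) ↔ IsDomSet G X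

/-- `(K, I)` is a split partition of `G`: `K` is a clique, `I` an independent set,
they are disjoint and cover all vertices. -/
def IsSplitPartition {V : Type*} [Fintype V] (G : SimpleGraph V) (K I : Finset V) : Prop :=
  Disjoint K I ∧ K ∪ I = Finset.univ ∧ G.IsClique (K : Set V) ∧
    ∀ u ∈ I, ∀ v ∈ I, ¬ G.Adj u v

/-- The labeled split graph `(G, K, I)` is clique-Sperner: for `u, v ∈ K`,
`N(u) ∩ I ⊆ N(v) ∩ I` implies `u = v`. -/
def CliqueSperner {V : Type*} (G : SimpleGraph V) (K I : Finset V) : Prop :=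
  ∀ u ∈ K, ∀ v ∈ K,
    G.neighborSet u ∩ (I : Set V) ⊆ G.neighborSet v ∩ (I : Set V) → u = v

/-- The labeled split graph `(G, K, I)` is independent-Sperner: for `u, v ∈ I`,
`N(u) ⊆ N(v)` implies `u = v`. -/
def IndependentSperner {V : Type*} (G : SimpleGraph V) (K I : Finset V) : Prop :=
  ∀ u ∈ I, ∀ v ∈ I, G.neighborSet u ⊆ G.neighborSet v → u = v

/-- `(A, B)` is a bipartition of `G` into two disjoint independent sets covering
all vertices. -/
def IsBipartition {V : Type*} [Fintype V] (G : SimpleGraph V) (A B : Finset V) : Prop :=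
  Disjoint A B ∧ A ∪ B = Finset.univ ∧
    (∀ u ∈ A, ∀ v ∈ A, ¬ G.Adj u v) ∧ (∀ u ∈ B, ∀ v ∈ B, ¬ G.Adj u v)

/-- The labeled bigraph `(G, A, B)` is right-Sperner: for `u, v ∈ B`,
`N(u) ⊆ N(v)` implies `u = v`. -/
def RightSperner {V : Type*} (G : SimpleGraph V) (A B : Finset V) : Prop :=
  ∀ u ∈ B, ∀ v ∈ B, G.neighborSet u ⊆ G.neighborSet v → u = v

/-- The graph `2P₃`: disjoint union of the paths `0-1-2` and `3-4-5`. -/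
def twoP3 : SimpleGraph (Fin 6) :=
  SimpleGraph.fromRel (fun u v =>
    (u, v) ∈ ([(0,1),(1,2),(3,4),(4,5)] : List (Fin 6 × Fin 6)))

/-- The graph `H`: obtained from `2P₃` (paths `0-1-2` and `3-4-5`) by adding the
edge `1-4` between the two middle vertices. -/
def graphH : SimpleGraph (Fin 6) :=
  SimpleGraph.fromRel (fun u v =>
    (u, v) ∈ ([(0,1),(1,2),(3,4),(4,5),(1,4)] : List (Fin 6 × Fin 6)))

/-- The domination number: minimum size of a dominating set. -/
noncomputable def gamma {W : Type*} [Fintype W] (G : SimpleGraph W) : ℕ :=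
  sInf {n | ∃ D : Finset W, IsDomSet G D ∧ D.card = n}

/-- The total domination number: minimum size of a total dominating set. -/
noncomputable def gammaT {W : Type*} [Fintype W] (G : SimpleGraph W) : ℕ :=
  sInf {n | ∃ D : Finset W, (∀ v : W, ∃ u ∈ D, G.Adj u v) ∧ D.card = n}

/-- The connected domination number: minimum size of a connected dominating set. -/
noncomputable def gammaC {W : Type*} [Fintype W] (G : SimpleGraph W) : ℕ :=
  sInf {n | ∃ D : Finset W, IsDomSet G D ∧ (G.induce (D : Set W)).Connected ∧ D.card = n}

/-- The co-occurrence graph of a hypergraph: two distinct vertices are adjacent iff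
some hyperedge contains both. -/
def coOccurrenceGraph {W : Type*} (E : Set (Finset W)) : SimpleGraph W where
  Adj u v := u ≠ v ∧ ∃ e ∈ E, u ∈ e ∧ v ∈ e
  symm := by
    constructor
    rintro u v ⟨h, e, he, hu, hv⟩
    exact ⟨h.symm, e, he, hv, hu⟩
  loopless := by
    constructor
    rintro u ⟨h, -⟩
    exact h rfl

/-- The edge-clique split graph of a hypergraph `(V, E)`: vertex set `E ⊕ V`, the
hyperedges form a clique, the vertices an independent set, and `v ∈ V` is adjacent
to `e ∈ E` iff `v ∈ e`. -/
def edgeCliqueGraph {V : Type*} (E : Finset (Finset V)) :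
    SimpleGraph ({e // e ∈ E} ⊕ V) where
  Adj x y :=
    match x, y with
    | Sum.inl e, Sum.inl f => e ≠ f
    | Sum.inl e, Sum.inr v => v ∈ (e : Finset V)
    | Sum.inr v, Sum.inl e => v ∈ (e : Finset V)
    | Sum.inr _, Sum.inr _ => False
  symm := by
    constructor
    rintro (e | u) (f | v) h
    · exact Ne.symm h
    · exact h
    · exact h
    · exact h.elim
  loopless := by
    constructor
    rintro (e | v) h
    · exact h rfl
    · exact h


/-!
All four conditions are equivalent to `G` having no alternating 4-cycle: vertices `a, b, c, d`
with `ab, cd` edges and `ac, bd` non-edges. Threshold weights forbid such a cycle outright, and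
an alternating 4-cycle exists exactly when two maximal cliques each have two vertices outside
the other (a far pair), which is what 1-Spernerness of `C(G)` excludes. Without alternating
4-cycles every nonempty vertex set induces an isolated or a dominating vertex, so weights for
`G` and for `C(G)` are built by adding vertices one at a time.

The hard part is that 2-asummability excludes far pairs. For a far pair `e, f` with `e ∪ f`
minimal and non-adjacent `a ∈ e \ f`, `c ∈ f \ e`, the set `e ∩ f ∪ {a, c}` contains no maximal
clique, so `(e ∪ f) \ {a, c}` must contain one, `M`. By minimality `M` meets `e \ f` and `f \ e`
in one vertex each (or one side has only two vertices, a case settled directly), and two such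
cliques form a far pair with a smaller union.
-/

section Hypergraph

variable {V : Type*}

lemma sum_eq_sum_mul_chiVec [Fintype V] [DecidableEq V] (w : V → ℕ) (X : Finset V) :
    ∑ x ∈ X, w x = ∑ u, w u * chiVec X u := by
  simp [chiVec, mul_ite, sum_ite_mem]

theorem HypThreshold.twoAsummable [Fintype V] [DecidableEq V] {E : Set (Finset V)}
    (h : HypThreshold E) : TwoAsummable E := by
  rintro ⟨A₁, A₂, B₁, B₂, hA₁, hA₂, hB₁, hB₂, hχ⟩
  obtain ⟨w, t, hw⟩ := h
  have hsum : ∑ x ∈ A₁, w x + ∑ x ∈ A₂, w x = ∑ x ∈ B₁, w x + ∑ x ∈ B₂, w x := by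
    simp only [sum_eq_sum_mul_chiVec w, ← sum_add_distrib, ← mul_add, hχ]
  have hB₁' := (hw B₁).2 hB₁
  have hB₂' := (hw B₂).2 hB₂
  have hA₁' := mt (hw A₁).1 hA₁
  have hA₂' := mt (hw A₂).1 hA₂
  omega

lemma chiVec_add_chiVec [DecidableEq V] (A B : Finset V) (u : V) :
    chiVec A u + chiVec B u = chiVec (A ∪ B) u + chiVec (A ∩ B) u := by
  by_cases hA : u ∈ A <;> by_cases hB : u ∈ B <;> simp [chiVec, hA, hB]

lemma not_twoAsummable_of_union_eq_of_inter_eq [DecidableEq V] {E : Set (Finset V)}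
    {A₁ A₂ B₁ B₂ : Finset V} (hA₁ : ¬ HypDep E A₁) (hA₂ : ¬ HypDep E A₂) (hB₁ : HypDep E B₁)
    (hB₂ : HypDep E B₂) (hunion : A₁ ∪ A₂ = B₁ ∪ B₂) (hinter : A₁ ∩ A₂ = B₁ ∩ B₂) :
    ¬ TwoAsummable E :=
  fun h => h ⟨A₁, A₂, B₁, B₂, hA₁, hA₂, hB₁, hB₂, fun u => by
    rw [chiVec_add_chiVec A₁, chiVec_add_chiVec B₁, hunion, hinter]⟩

end Hypergraph

section MaximalCliques

variable {V : Type*} {G : SimpleGraph V}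

def IsMaximalCliqueIn (G : SimpleGraph V) (S K : Finset V) : Prop :=
  K ⊆ S ∧ G.IsClique (K : Set V) ∧ ∀ u ∈ S, u ∉ K → ∃ k ∈ K, ¬ G.Adj u k

lemma mem_cliqueHyp_iff [Fintype V] {K : Finset V} :
    K ∈ CliqueHyp G ↔ IsMaximalCliqueIn G univ K := by
  refine ⟨fun hK => ⟨subset_univ K, hK.1, fun u _ hu => ?_⟩,
    fun hK => ⟨hK.2.1, fun T hT hKT => Subset.antisymm (fun u hu => ?_) hKT⟩⟩
  · by_contra! hadj
    have hcl : G.IsClique ((insert u K : Finset V) : Set V) := by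
      rw [coe_insert, SimpleGraph.isClique_insert]
      exact ⟨hK.1, fun k hk _ => hadj k hk⟩
    exact hu (hK.2 _ hcl (subset_insert u K) ▸ mem_insert_self u K)
  · by_contra huK
    obtain ⟨k, hk, hnadj⟩ := hK.2.2 u (mem_univ u) huK
    exact hnadj (hT hu (hKT hk) (ne_of_mem_of_not_mem hk huK).symm)

lemma exists_not_adj_of_not_mem [Fintype V] {M : Finset V} (hM : M ∈ CliqueHyp G) {u : V}
    (hu : u ∉ M) : ∃ k ∈ M, ¬ G.Adj u k :=
  (mem_cliqueHyp_iff.1 hM).2.2 u (mem_univ u) hu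

lemma exists_mem_sdiff_not_adj [Fintype V] [DecidableEq V] {e M : Finset V}
    (he : G.IsClique (e : Set V)) (hM : M ∈ CliqueHyp G) {a : V} (hae : a ∈ e) (haM : a ∉ M) :
    ∃ c ∈ M \ e, ¬ G.Adj a c := by
  obtain ⟨c, hcM, hac⟩ := exists_not_adj_of_not_mem hM haM
  refine ⟨c, mem_sdiff.2 ⟨hcM, fun hce => hac (he hae hce ?_)⟩, hac⟩
  rintro rfl
  exact haM hcM

lemma exists_mem_cliqueHyp_superset [Fintype V] {s : Finset V} (hs : G.IsClique (s : Set V)) :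
    ∃ M ∈ CliqueHyp G, s ⊆ M := by
  obtain ⟨M, hsM, hM⟩ :=
    Finite.exists_le_maximal (p := fun T : Finset V => G.IsClique (T : Set V)) hs
  exact ⟨M, ⟨hM.prop, fun T hT hMT => (hM.le_of_ge hT hMT).antisymm hMT⟩, hsM⟩

lemma sdiff_nonempty_of_mem_cliqueHyp [DecidableEq V] {e f : Finset V} (he : e ∈ CliqueHyp G)
    (hf : f ∈ CliqueHyp G) (hne : e ≠ f) : (e \ f).Nonempty :=
  sdiff_nonempty.2 fun hef => hne (he.2 f hf.1 hef).symm

end MaximalCliques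

section AltFourCycle

variable {V : Type*} {G : SimpleGraph V}

/-- Alternating 4-cycles are the induced `2K₂`, `P₄` and `C₄`. -/
def AltFourCycleFree (G : SimpleGraph V) : Prop :=
  ∀ a b c d, G.Adj a b → G.Adj c d → a ≠ c → b ≠ d → G.Adj a c ∨ G.Adj b d

def FarCliquePair [DecidableEq V] (G : SimpleGraph V) (e f : Finset V) : Prop :=
  e ∈ CliqueHyp G ∧ f ∈ CliqueHyp G ∧ 1 < (e \ f).card ∧ 1 < (f \ e).card

lemma oneSperner_cliqueHyp_iff [DecidableEq V] :
    OneSperner (CliqueHyp G) ↔ ∀ e f, ¬ FarCliquePair G e f := by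
  refine ⟨fun h e f ⟨he, hf, hef, hfe⟩ => ?_, fun h e he f hf hne => ?_⟩
  · have := h e he f hf fun heq => by simp [heq] at hef
    omega
  · have := card_pos.2 (sdiff_nonempty_of_mem_cliqueHyp he hf hne)
    have := card_pos.2 (sdiff_nonempty_of_mem_cliqueHyp hf he hne.symm)
    have := h e f
    simp only [FarCliquePair, he, hf, true_and, not_and, not_lt] at this
    omega

lemma ThresholdGraph.altFourCycleFree [Fintype V] (h : ThresholdGraph G) :
    AltFourCycleFree G := by
  intro a b c d hab hcd hac hbd
  by_contra! hn
  obtain ⟨w, t, hw⟩ := h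
  have pair_le_iff : ∀ x y, x ≠ y → (w x + w y ≤ t ↔ ¬ G.Adj x y) := by
    intro x y hxy
    rw [← sum_pair hxy, hw]
    simp [G.adj_comm y x]
  have hab' := (pair_le_iff a b hab.ne).not.2 (not_not.2 hab)
  have hcd' := (pair_le_iff c d hcd.ne).not.2 (not_not.2 hcd)
  have hac' := (pair_le_iff a c hac).2 hn.1
  have hbd' := (pair_le_iff b d hbd).2 hn.2
  omega

lemma exists_two_disjoint_pairs {α β : Type*} {X : Finset α} {Y : Finset β} (R : α → β → Prop)
    (hX : 1 < X.card) (hY : 1 < Y.card) (hXY : ∀ x ∈ X, ∃ y ∈ Y, R x y)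
    (hYX : ∀ y ∈ Y, ∃ x ∈ X, R x y) :
    ∃ a ∈ X, ∃ b ∈ X, ∃ c ∈ Y, ∃ d ∈ Y, a ≠ b ∧ c ≠ d ∧ R a c ∧ R b d := by
  obtain ⟨a, ha⟩ := card_pos.1 (by omega : 0 < X.card)
  obtain ⟨c, hc, hac⟩ := hXY a ha
  obtain ⟨b, hb, hba⟩ := exists_mem_ne hX a
  obtain ⟨c', hc', hbc'⟩ := hXY b hb
  by_cases hcc' : c = c'
  · subst hcc'
    obtain ⟨d, hd, hdc⟩ := exists_mem_ne hY c
    obtain ⟨x, hx, hxd⟩ := hYX d hd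
    by_cases hxa : x = a
    · subst hxa
      exact ⟨b, hb, x, hx, c, hc, d, hd, hba, hdc.symm, hbc', hxd⟩
    · exact ⟨a, ha, x, hx, c, hc, d, hd, Ne.symm hxa, hdc.symm, hac, hxd⟩
  · exact ⟨a, ha, b, hb, c, hc, c', hc', hba.symm, hcc', hac, hbc'⟩

lemma AltFourCycleFree.not_farCliquePair [Fintype V] [DecidableEq V] (h : AltFourCycleFree G)
    (e f : Finset V) : ¬ FarCliquePair G e f := by
  rintro ⟨he, hf, hef, hfe⟩
  obtain ⟨a, ha, b, hb, c, hc, d, hd, hab, hcd, hac, hbd⟩ :=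
    exists_two_disjoint_pairs (fun x y => ¬ G.Adj x y) hef hfe
      (fun x hx => exists_mem_sdiff_not_adj he.1 hf (mem_sdiff.1 hx).1 (mem_sdiff.1 hx).2)
      (fun y hy => by
        obtain ⟨x, hx, hyx⟩ :=
          exists_mem_sdiff_not_adj hf.1 he (mem_sdiff.1 hy).1 (mem_sdiff.1 hy).2
        exact ⟨x, hx, fun hxy => hyx hxy.symm⟩)
  rw [mem_sdiff] at ha hb hc hd
  rcases h a b c d (he.1 ha.1 hb.1 hab) (hf.1 hc.1 hd.1 hcd) (ne_of_mem_of_not_mem ha.1 hc.2)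
    (ne_of_mem_of_not_mem hb.1 hd.2) with h' | h'
  · exact hac h'
  · exact hbd h'

lemma altFourCycleFree_of_forall_not_farCliquePair [Fintype V] [DecidableEq V]
    (h : ∀ e f, ¬ FarCliquePair G e f) : AltFourCycleFree G := by
  intro a b c d hab hcd hac hbd
  by_contra! hn
  obtain ⟨e, he, habe⟩ := exists_mem_cliqueHyp_superset (G := G) (s := {a, b}) (by simp [hab])
  obtain ⟨f, hf, hcdf⟩ := exists_mem_cliqueHyp_superset (G := G) (s := {c, d}) (by simp [hcd])
  rw [insert_subset_iff, singleton_subset_iff] at habe hcdf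
  have haf : a ∉ f := fun haf => hn.1 (hf.1 haf hcdf.1 hac)
  have hbf : b ∉ f := fun hbf => hn.2 (hf.1 hbf hcdf.2 hbd)
  have hce : c ∉ e := fun hce => hn.1 (he.1 habe.1 hce hac)
  have hde : d ∉ e := fun hde => hn.2 (he.1 habe.2 hde hbd)
  exact h e f ⟨he, hf, one_lt_card.2 ⟨a, mem_sdiff.2 ⟨habe.1, haf⟩, b, mem_sdiff.2 ⟨habe.2, hbf⟩,
    hab.ne⟩, one_lt_card.2 ⟨c, mem_sdiff.2 ⟨hcdf.1, hce⟩, d, mem_sdiff.2 ⟨hcdf.2, hde⟩, hcd.ne⟩⟩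

lemma AltFourCycleFree.neighbors_nested (h : AltFourCycleFree G) (u v : V) :
    (∀ x, G.Adj u x → x ≠ v → G.Adj v x) ∨ (∀ y, G.Adj v y → y ≠ u → G.Adj u y) := by
  by_contra! hc
  obtain ⟨⟨x, hux, hxv, hvx⟩, ⟨y, hvy, hyu, huy⟩⟩ := hc
  rcases h x u v y hux.symm hvy hxv hyu.symm with hxv' | huy'
  · exact hvx hxv'.symm
  · exact huy huy'

lemma AltFourCycleFree.exists_isolated_or_dominating (h : AltFourCycleFree G) {S : Finset V}
    (hS : S.Nonempty) :
    ∃ v ∈ S, (∀ u ∈ S, ¬ G.Adj v u) ∨ (∀ u ∈ S, u ≠ v → G.Adj v u) := by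
  set N : V → Finset V := fun u => S.filter (G.Adj u) with hN
  obtain ⟨v, hvS, hvmax⟩ := exists_max_image S (fun u => (N u).card) hS
  by_cases hdom : ∀ u ∈ S, u ≠ v → G.Adj v u
  · exact ⟨v, hvS, Or.inr hdom⟩
  push Not at hdom
  obtain ⟨u, huS, huv, hvu⟩ := hdom
  -- A non-neighbour `u` of a vertex `v` of maximum degree is isolated.
  refine ⟨u, huS, Or.inl fun x hxS hux => ?_⟩
  have hNuv : N u ⊆ N v := by
    rcases h.neighbors_nested u v with h' | h'
    · intro y hy
      simp only [hN, mem_filter] at hy ⊢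
      exact ⟨hy.1, h' y hy.2 fun hyv => hvu (hyv ▸ hy.2).symm⟩
    · refine (eq_of_subset_of_card_le (fun y hy => ?_) (hvmax u huS)).symm.subset
      simp only [hN, mem_filter] at hy ⊢
      exact ⟨hy.1, h' y hy.2 fun hyu => hvu (hyu ▸ hy.2)⟩
  have hvx : G.Adj v x := (mem_filter.1 (hNuv (mem_filter.2 ⟨hxS, hux⟩))).2
  rcases h.neighbors_nested x v with h' | h'
  · exact hvu (h' u hux.symm huv)
  · have hsub : insert u (insert v ((N v).erase x)) ⊆ N x := by
      intro y hy
      simp only [hN, mem_insert, mem_erase, mem_filter] at hy ⊢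
      rcases hy with rfl | rfl | ⟨hyx, hyS, hvy⟩
      · exact ⟨huS, hux.symm⟩
      · exact ⟨hvS, hvx.symm⟩
      · exact ⟨hyS, h' y hvy hyx⟩
    have hu : u ∉ insert v ((N v).erase x) := by
      simp [hN, huv, hvu]
    have hv : v ∉ (N v).erase x := by simp [hN]
    have hcard := card_le_card hsub
    rw [card_insert_of_notMem hu, card_insert_of_notMem hv,
      card_erase_of_mem (s := N v) (mem_filter.2 ⟨hxS, hvx⟩)] at hcard
    have hpos : 0 < (N v).card := card_pos.2 ⟨x, mem_filter.2 ⟨hxS, hvx⟩⟩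
    have := hvmax x hxS
    omega

theorem AltFourCycleFree.finset_induction [DecidableEq V] (h : AltFourCycleFree G)
    {P : Finset V → Prop} (empty : P ∅)
    (isolated : ∀ S v, v ∈ S → (∀ u ∈ S, ¬ G.Adj v u) → P (S.erase v) → P S)
    (dominating : ∀ S v, v ∈ S → (∀ u ∈ S, u ≠ v → G.Adj v u) → P (S.erase v) → P S)
    (S : Finset V) : P S := by
  induction S using Finset.strongInduction with
  | H S ih =>
    rcases S.eq_empty_or_nonempty with rfl | hS
    · exact empty
    obtain ⟨v, hv, hiso | hdom⟩ := h.exists_isolated_or_dominating hS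
    · exact isolated S v hv hiso (ih _ (erase_ssubset hv))
    · exact dominating S v hv hdom (ih _ (erase_ssubset hv))

end AltFourCycle

section Weights

variable {V : Type*} {G : SimpleGraph V}

lemma sum_update_eq [DecidableEq V] (w : V → ℕ) (v : V) (b : ℕ) (X : Finset V) :
    ∑ x ∈ X, Function.update w v b x = (if v ∈ X then b else 0) + ∑ x ∈ X.erase v, w x := by
  by_cases hv : v ∈ X
  · rw [sum_update_of_mem hv, sdiff_singleton_eq_erase, if_pos hv]
  · rw [sum_update_of_notMem hv, erase_eq_of_notMem hv, if_neg hv, zero_add]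

/-- The weights are kept positive so that a dominating vertex can be added. -/
def PosThresholdOn (G : SimpleGraph V) (S : Finset V) : Prop :=
  ∃ (w : V → ℕ) (t : ℕ), (∀ u, 0 < w u) ∧
    ∀ X ⊆ S, ((∑ x ∈ X, w x) ≤ t ↔ ∀ u ∈ X, ∀ v ∈ X, ¬ G.Adj u v)

lemma posThresholdOn_empty : PosThresholdOn G ∅ :=
  ⟨fun _ => 1, 0, fun _ => one_pos, fun X hX => by simp [subset_empty.1 hX]⟩

lemma PosThresholdOn.of_isolated [DecidableEq V] {S : Finset V} {v : V}
    (hiso : ∀ u ∈ S, ¬ G.Adj v u) (h : PosThresholdOn G (S.erase v)) : PosThresholdOn G S := by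
  obtain ⟨w, t, hw, ht⟩ := h
  refine ⟨Function.update (fun u => 2 * w u) v 1, 2 * t + 1, fun u => ?_, fun X hX => ?_⟩
  · by_cases huv : u = v <;> simp [huv, hw]
  have hind : (∀ u ∈ X, ∀ x ∈ X, ¬ G.Adj u x) ↔
      ∀ u ∈ X.erase v, ∀ x ∈ X.erase v, ¬ G.Adj u x := by
    refine ⟨fun hX' u hu x hx => hX' u (mem_of_mem_erase hu) x (mem_of_mem_erase hx),
      fun hX' u hu x hx hux => ?_⟩
    rcases eq_or_ne u v with rfl | huv
    · exact hiso x (hX hx) hux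
    rcases eq_or_ne x v with rfl | hxv
    · exact hiso u (hX hu) hux.symm
    exact hX' u (mem_erase.2 ⟨huv, hu⟩) x (mem_erase.2 ⟨hxv, hx⟩) hux
  rw [sum_update_eq, ← mul_sum, hind, ← ht _ (erase_subset_erase v hX)]
  split_ifs <;> omega

lemma PosThresholdOn.of_dominating [DecidableEq V] {S : Finset V} {v : V}
    (hdom : ∀ u ∈ S, u ≠ v → G.Adj v u) (h : PosThresholdOn G (S.erase v)) :
    PosThresholdOn G S := by
  obtain ⟨w, t, hw, ht⟩ := h
  refine ⟨Function.update (fun u => 2 * w u) v (2 * t + 1), 2 * t + 1, fun u => ?_,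
    fun X hX => ?_⟩
  · by_cases huv : u = v <;> simp [huv, hw]
  rw [sum_update_eq, ← mul_sum]
  by_cases hvX : v ∈ X
  · rw [if_pos hvX]
    -- `X` is independent iff `X = {v}`, iff the rest of `X` has weight zero.
    have hind : (∀ u ∈ X, ∀ x ∈ X, ¬ G.Adj u x) ↔ X.erase v = ∅ := by
      refine ⟨fun hX' => eq_empty_of_forall_notMem fun y hy => ?_, fun hXv u hu x hx => ?_⟩
      · obtain ⟨hyv, hyX⟩ := mem_erase.1 hy
        exact hX' v hvX y hyX (hdom y (hX hyX) hyv)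
      · have hXv' : ∀ y ∈ X, y = v := fun y hy => by
          by_contra hyv
          simpa [hXv] using mem_erase.2 ⟨hyv, hy⟩
        rw [hXv' u hu, hXv' x hx]
        exact G.irrefl
    rw [hind]
    refine ⟨fun hle => eq_empty_of_forall_notMem fun y hy => ?_, fun hXv => by simp [hXv]⟩
    have hzero : ∑ x ∈ X.erase v, w x = 0 := by omega
    exact (hw y).ne' (sum_eq_zero_iff.1 hzero y hy)
  · rw [if_neg hvX, erase_eq_of_notMem hvX,
      ← ht X fun x hx => mem_erase.2 ⟨fun hxv => hvX (hxv ▸ hx), hX hx⟩]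
    omega

theorem AltFourCycleFree.thresholdGraph [Fintype V] (h : AltFourCycleFree G) :
    ThresholdGraph G := by
  obtain ⟨w, t, -, hw⟩ := h.finset_induction posThresholdOn_empty
    (fun _ _ _ hiso => PosThresholdOn.of_isolated hiso)
    (fun _ _ _ hdom => PosThresholdOn.of_dominating hdom) univ
  exact ⟨w, t, fun X => hw X (subset_univ X)⟩

end Weights

section CliqueWeights

variable {V : Type*} {G : SimpleGraph V} {S K : Finset V} {v : V}

lemma isMaximalCliqueIn_singleton (hv : v ∈ S) (hiso : ∀ u ∈ S, ¬ G.Adj v u) :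
    IsMaximalCliqueIn G S {v} :=
  ⟨singleton_subset_iff.2 hv, by simp, fun u hu _ => ⟨v, mem_singleton_self v,
    fun huv => hiso u hu huv.symm⟩⟩

lemma isMaximalCliqueIn_erase_iff_of_isolated [DecidableEq V] (hiso : ∀ u ∈ S, ¬ G.Adj v u)
    (hS : (S.erase v).Nonempty) (hvK : v ∉ K) :
    IsMaximalCliqueIn G S K ↔ IsMaximalCliqueIn G (S.erase v) K := by
  refine ⟨fun ⟨hKS, hK, hmax⟩ => ⟨fun x hx => mem_erase.2 ⟨ne_of_mem_of_not_mem hx hvK, hKS hx⟩,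
    hK, fun u hu huK => hmax u (mem_of_mem_erase hu) huK⟩, fun ⟨hKS, hK, hmax⟩ =>
    ⟨hKS.trans (erase_subset v S), hK, fun u hu huK => ?_⟩⟩
  rcases eq_or_ne u v with rfl | huv
  · obtain ⟨s, hs⟩ := hS
    obtain ⟨k, hk⟩ : K.Nonempty := by
      by_cases hsK : s ∈ K
      · exact ⟨s, hsK⟩
      · obtain ⟨k, hk, -⟩ := hmax s hs hsK
        exact ⟨k, hk⟩
    exact ⟨k, hk, hiso k (mem_of_mem_erase (hKS hk))⟩
  · exact hmax u (mem_erase.2 ⟨huv, hu⟩) huK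

lemma isMaximalCliqueIn_iff_of_dominating [DecidableEq V] (hv : v ∈ S)
    (hdom : ∀ u ∈ S, u ≠ v → G.Adj v u) :
    IsMaximalCliqueIn G S K ↔ v ∈ K ∧ IsMaximalCliqueIn G (S.erase v) (K.erase v) := by
  constructor
  · rintro ⟨hKS, hK, hmax⟩
    have hvK : v ∈ K := by
      by_contra hvK
      obtain ⟨k, hk, hvk⟩ := hmax v hv hvK
      exact hvk (hdom k (hKS hk) (ne_of_mem_of_not_mem hk hvK))
    refine ⟨hvK, erase_subset_erase v hKS, hK.subset (coe_subset.2 (erase_subset v K)),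
      fun u hu huK => ?_⟩
    obtain ⟨huv, huS⟩ := mem_erase.1 hu
    obtain ⟨k, hk, huk⟩ := hmax u huS fun h => huK (mem_erase.2 ⟨huv, h⟩)
    refine ⟨k, mem_erase.2 ⟨?_, hk⟩, huk⟩
    rintro rfl
    exact huk (hdom u huS huv).symm
  · rintro ⟨hvK, hKS, hK, hmax⟩
    refine ⟨?_, ?_, fun u hu huK => ?_⟩
    · rw [← insert_erase hvK]
      exact insert_subset hv (hKS.trans (erase_subset v S))
    · rw [← insert_erase hvK, coe_insert, SimpleGraph.isClique_insert]
      exact ⟨hK, fun k hk hvk => hdom k (mem_of_mem_erase (hKS hk)) (Ne.symm hvk)⟩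
    · have huv : u ≠ v := fun huv => huK (huv ▸ hvK)
      obtain ⟨k, hk, huk⟩ := hmax u (mem_erase.2 ⟨huv, hu⟩) fun h => huK (mem_of_mem_erase h)
      exact ⟨k, mem_of_mem_erase hk, huk⟩

def CliqueThresholdOn (G : SimpleGraph V) (S : Finset V) : Prop :=
  ∃ (w : V → ℕ) (t : ℕ), ∀ X ⊆ S, (t ≤ ∑ x ∈ X, w x ↔ ∃ K ⊆ X, IsMaximalCliqueIn G S K)

lemma cliqueThresholdOn_empty : CliqueThresholdOn G ∅ :=
  ⟨0, 0, fun X _ => iff_of_true (Nat.zero_le _)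
    ⟨∅, empty_subset X, subset_rfl, by simp, fun u hu => absurd hu (notMem_empty u)⟩⟩

lemma CliqueThresholdOn.of_dominating [DecidableEq V] (hv : v ∈ S)
    (hdom : ∀ u ∈ S, u ≠ v → G.Adj v u)
    (h : CliqueThresholdOn G (S.erase v)) : CliqueThresholdOn G S := by
  obtain ⟨w, t, ht⟩ := h
  refine ⟨Function.update w v (∑ x ∈ S, w x + 1), t + ∑ x ∈ S, w x + 1, fun X hX => ?_⟩
  rw [sum_update_eq]
  by_cases hvX : v ∈ X
  · rw [if_pos hvX]
    calc t + ∑ x ∈ S, w x + 1 ≤ ∑ x ∈ S, w x + 1 + ∑ x ∈ X.erase v, w x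
        ↔ t ≤ ∑ x ∈ X.erase v, w x := by omega
      _ ↔ ∃ K ⊆ X.erase v, IsMaximalCliqueIn G (S.erase v) K := ht _ (erase_subset_erase v hX)
      _ ↔ ∃ K ⊆ X, IsMaximalCliqueIn G S K := by
        simp_rw [isMaximalCliqueIn_iff_of_dominating hv hdom]
        refine ⟨fun ⟨K, hKX, hK⟩ => ⟨insert v K, insert_subset hvX (hKX.trans (erase_subset v X)),
          mem_insert_self v K, ?_⟩,
          fun ⟨K, hKX, _, hK⟩ => ⟨K.erase v, erase_subset_erase v hKX, hK⟩⟩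
        rwa [erase_insert fun hvK => (mem_erase.1 (hK.1 hvK)).1 rfl]
  · rw [if_neg hvX, zero_add]
    have : ∑ x ∈ X.erase v, w x ≤ ∑ x ∈ S, w x :=
      sum_le_sum_of_subset ((erase_subset v X).trans hX)
    refine ⟨fun hle => by omega, fun ⟨K, hKX, hK⟩ => ?_⟩
    exact absurd (hKX ((isMaximalCliqueIn_iff_of_dominating hv hdom).1 hK).1) hvX

lemma CliqueThresholdOn.of_isolated [DecidableEq V] (hv : v ∈ S) (hiso : ∀ u ∈ S, ¬ G.Adj v u)
    (h : CliqueThresholdOn G (S.erase v)) : CliqueThresholdOn G S := by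
  rcases (S.erase v).eq_empty_or_nonempty with hS | hS
  · -- Here the isolated step fails (`∅` is the maximal clique of `G[∅]`), but `v` dominates `{v}`.
    refine h.of_dominating hv fun u hu huv => ?_
    simpa [hS] using mem_erase.2 ⟨huv, hu⟩
  obtain ⟨w, t, ht⟩ := h
  refine ⟨Function.update w v t, t, fun X hX => ?_⟩
  rw [sum_update_eq]
  by_cases hvX : v ∈ X
  · rw [if_pos hvX]
    exact iff_of_true (Nat.le_add_right t _)
      ⟨{v}, singleton_subset_iff.2 hvX, isMaximalCliqueIn_singleton hv hiso⟩
  · rw [if_neg hvX, zero_add, erase_eq_of_notMem hvX,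
      ht X fun x hx => mem_erase.2 ⟨fun hxv => hvX (hxv ▸ hx), hX hx⟩]
    exact exists_congr fun K => and_congr_right fun hKX =>
      (isMaximalCliqueIn_erase_iff_of_isolated hiso hS fun hvK => hvX (hKX hvK)).symm

theorem AltFourCycleFree.hypThreshold [Fintype V] (h : AltFourCycleFree G) :
    HypThreshold (CliqueHyp G) := by
  obtain ⟨w, t, ht⟩ := h.finset_induction cliqueThresholdOn_empty
    (fun _ _ hv hiso => CliqueThresholdOn.of_isolated hv hiso)
    (fun _ _ hv hdom => CliqueThresholdOn.of_dominating hv hdom) univ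
  refine ⟨w, t, fun X => (ht X (subset_univ X)).trans ?_⟩
  simp only [HypDep, mem_cliqueHyp_iff]
  exact ⟨fun ⟨K, hKX, hK⟩ => ⟨K, hK, hKX⟩, fun ⟨K, hK, hKX⟩ => ⟨K, hKX, hK⟩⟩

end CliqueWeights

section TwoAsummable

variable {V : Type*} [DecidableEq V] {G : SimpleGraph V} {e f : Finset V}

lemma sdiff_subset_sdiff_of_subset_union {M : Finset V} (h : M ⊆ e ∪ f) : M \ e ⊆ f \ e :=
  union_sdiff_left e f ▸ sdiff_subset_sdiff h subset_rfl

lemma union_ssubset_union_of_not_mem {M : Finset V} (hM : M ⊆ e ∪ f) {c : V} (hcf : c ∈ f)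
    (hce : c ∉ e) (hcM : c ∉ M) : e ∪ M ⊂ e ∪ f :=
  (ssubset_iff_of_subset (union_subset subset_union_left hM)).2
    ⟨c, mem_union_right e hcf, by simp [hce, hcM]⟩

lemma not_subset_inter_union_pair (he : G.IsClique (e : Set V)) (hX : 1 < (e \ f).card)
    {a c : V} (ha : a ∈ e \ f) {M : Finset V} (hM : M ∈ CliqueHyp G) (hcM : c ∉ M) :
    ¬ M ⊆ e ∩ f ∪ {a, c} := by
  intro hsub
  have hMe : M ⊆ e := fun x hx => by
    rcases mem_union.1 (hsub hx) with hx' | hx'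
    · exact (mem_inter.1 hx').1
    · rcases mem_insert.1 hx' with rfl | hxc
      · exact (mem_sdiff.1 ha).1
      · exact absurd (mem_singleton.1 hxc ▸ hx) hcM
  obtain ⟨b, hb, hba⟩ := exists_mem_ne hX a
  have hbM : b ∈ M := hM.2 e he hMe ▸ (mem_sdiff.1 hb).1
  rcases mem_union.1 (hsub hbM) with hb' | hb'
  · exact (mem_sdiff.1 hb).2 (mem_inter.1 hb').2
  · rcases mem_insert.1 hb' with rfl | hbc
    · exact hba rfl
    · exact hcM (mem_singleton.1 hbc ▸ hbM)

lemma not_hypDep_inter_union_pair (he : e ∈ CliqueHyp G) (hf : f ∈ CliqueHyp G)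
    (hX : 1 < (e \ f).card) (hY : 1 < (f \ e).card) {a c : V} (ha : a ∈ e \ f)
    (hc : c ∈ f \ e) (hac : ¬ G.Adj a c) : ¬ HypDep (CliqueHyp G) (e ∩ f ∪ {a, c}) := by
  rintro ⟨M, hM, hsub⟩
  by_cases hcM : c ∈ M
  · have haM : a ∉ M := fun haM =>
      hac (hM.1 haM hcM (ne_of_mem_of_not_mem (mem_sdiff.1 ha).1 (mem_sdiff.1 hc).2))
    exact not_subset_inter_union_pair hf.1 hY hc hM haM (by rwa [inter_comm, pair_comm])
  · exact not_subset_inter_union_pair he.1 hX ha hM hcM hsub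

/-- What 2-asummability forces on a far pair: otherwise `e ∩ f ∪ {a, c}` and
`(e ∪ f) \ {a, c}` are independent sets with the same characteristic sum as `e` and `f`. -/
def AvoidsCrossNonEdges (G : SimpleGraph V) (e f : Finset V) : Prop :=
  ∀ a ∈ e \ f, ∀ c ∈ f \ e, ¬ G.Adj a c → ∃ M ∈ CliqueHyp G, M ⊆ e ∪ f ∧ a ∉ M ∧ c ∉ M

lemma avoidsCrossNonEdges_of_twoAsummable (h2 : TwoAsummable (CliqueHyp G))
    (hef : FarCliquePair G e f) : AvoidsCrossNonEdges G e f := by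
  obtain ⟨he, hf, hX, hY⟩ := hef
  intro a ha c hc hac
  have hA₂ : HypDep (CliqueHyp G) ((e ∪ f) \ {a, c}) := by
    by_contra hA₂
    refine not_twoAsummable_of_union_eq_of_inter_eq
      (not_hypDep_inter_union_pair he hf hX hY ha hc hac) hA₂ ⟨e, he, subset_rfl⟩
      ⟨f, hf, subset_rfl⟩ ?_ ?_ h2
    all_goals
      rw [mem_sdiff] at ha hc
      ext x
      simp only [mem_union, mem_inter, mem_sdiff, mem_insert, mem_singleton]
      grind
  obtain ⟨M, hM, hsub⟩ := hA₂
  refine ⟨M, hM, hsub.trans sdiff_subset, fun haM => ?_, fun hcM => ?_⟩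
  · simpa using (mem_sdiff.1 (hsub haM)).2
  · simpa using (mem_sdiff.1 (hsub hcM)).2

lemma AvoidsCrossNonEdges.symm (h : AvoidsCrossNonEdges G e f) : AvoidsCrossNonEdges G f e :=
  fun c hc a ha hca => by
    obtain ⟨M, hM, hsub, haM, hcM⟩ := h a ha c hc fun hac => hca hac.symm
    exact ⟨M, hM, union_comm e f ▸ hsub, hcM, haM⟩

lemma AvoidsCrossNonEdges.exists_two_not_adj [Fintype V] (h : AvoidsCrossNonEdges G e f)
    (he : e ∈ CliqueHyp G) (hf : f ∈ CliqueHyp G) {a : V} (ha : a ∈ e \ f) :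
    ∃ c₁ ∈ f \ e, ∃ c₂ ∈ f \ e, c₁ ≠ c₂ ∧ ¬ G.Adj a c₁ ∧ ¬ G.Adj a c₂ := by
  obtain ⟨c, hc, hac⟩ := exists_mem_sdiff_not_adj he.1 hf (mem_sdiff.1 ha).1 (mem_sdiff.1 ha).2
  obtain ⟨M, hM, hMef, haM, hcM⟩ := h a ha c hc hac
  obtain ⟨c', hc', hac'⟩ := exists_mem_sdiff_not_adj he.1 hM (mem_sdiff.1 ha).1 haM
  refine ⟨c, hc, c', sdiff_subset_sdiff_of_subset_union hMef hc', ?_, hac, hac'⟩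
  rintro rfl
  exact hcM (mem_sdiff.1 hc').1

lemma AvoidsCrossNonEdges.false_of_card_eq_two [Fintype V] (h : AvoidsCrossNonEdges G e f)
    (he : e ∈ CliqueHyp G) (hf : f ∈ CliqueHyp G) (hX : (e \ f).Nonempty)
    (hY : (f \ e).card = 2) : False := by
  have hnadj : ∀ x ∈ e \ f, ∀ y ∈ f \ e, ¬ G.Adj x y := by
    intro x hx y hy hxy
    obtain ⟨c₁, hc₁, c₂, hc₂, hne, h₁, h₂⟩ := h.exists_two_not_adj he hf hx
    have : 2 < (f \ e).card := two_lt_card.2 ⟨c₁, hc₁, c₂, hc₂, y, hy, hne,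
      fun hc₁y => h₁ (hc₁y ▸ hxy), fun hc₂y => h₂ (hc₂y ▸ hxy)⟩
    omega
  obtain ⟨a, ha⟩ := hX
  obtain ⟨c, hc, hac⟩ := exists_mem_sdiff_not_adj he.1 hf (mem_sdiff.1 ha).1 (mem_sdiff.1 ha).2
  obtain ⟨M, hM, hMef, haM, hcM⟩ := h a ha c hc hac
  obtain ⟨a', ha', -⟩ := exists_mem_sdiff_not_adj hf.1 hM (mem_sdiff.1 hc).1 hcM
  obtain ⟨c', hc', -⟩ := exists_mem_sdiff_not_adj he.1 hM (mem_sdiff.1 ha).1 haM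
  have ha'X := sdiff_subset_sdiff_of_subset_union (union_comm e f ▸ hMef) ha'
  have hc'Y := sdiff_subset_sdiff_of_subset_union hMef hc'
  exact hnadj a' ha'X c' hc'Y (hM.1 (mem_sdiff.1 ha').1 (mem_sdiff.1 hc').1
    (ne_of_mem_of_not_mem (mem_sdiff.1 ha'X).1 (mem_sdiff.1 hc').2))

lemma not_adj_of_sdiff_eq_singleton [Fintype V] (hf : G.IsClique (f : Set V)) {M : Finset V}
    (hM : M ∈ CliqueHyp G) {b : V} (hb : M \ f = {b}) {y : V} (hyf : y ∈ f) (hyM : y ∉ M) :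
    ¬ G.Adj y b := by
  obtain ⟨k, hk, hyk⟩ := exists_mem_sdiff_not_adj hf hM hyf hyM
  rw [hb, mem_singleton] at hk
  rwa [hk] at hyk

lemma eq_of_sdiff_eq_singleton {M : Finset V} {b : V} (hb : M \ f = {b}) {x : V} (hxM : x ∈ M)
    (hxf : x ∉ f) : x = b :=
  mem_singleton.1 (hb ▸ mem_sdiff.2 ⟨hxM, hxf⟩)

lemma AvoidsCrossNonEdges.card_sdiff_le_one [Fintype V] (h : AvoidsCrossNonEdges G e f)
    (he : e ∈ CliqueHyp G) (hf : f ∈ CliqueHyp G)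
    (hmin : ∀ e' f', FarCliquePair G e' f' → ¬ e' ∪ f' ⊂ e ∪ f) (hX : 2 < (e \ f).card)
    {a c : V} (ha : a ∈ e \ f) (hc : c ∈ f \ e) {M : Finset V} (hM : M ∈ CliqueHyp G)
    (hMef : M ⊆ e ∪ f) (haM : a ∉ M) (hcM : c ∉ M) : (M \ e).card ≤ 1 := by
  rw [mem_sdiff] at ha hc
  by_contra! hMe
  -- `(e, M)` and `(f, M)` are not far pairs, by minimality of `e ∪ f`.
  have heM : (e \ M).card ≤ 1 := le_of_not_gt fun heM =>
    hmin e M ⟨he, hM, heM, hMe⟩ (union_ssubset_union_of_not_mem hMef hc.1 hc.2 hcM)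
  have hXM : ∀ x ∈ e, x ≠ a → x ∈ M := fun x hx hxa => by
    by_contra hxM
    exact hxa (card_le_one.1 heM x (mem_sdiff.2 ⟨hx, hxM⟩) a (mem_sdiff.2 ⟨ha.1, haM⟩))
  have hMf : 1 < (M \ f).card := by
    refine lt_of_lt_of_le ?_ (card_le_card (s := (e \ f).erase a) fun x hx => ?_)
    · rw [card_erase_of_mem (mem_sdiff.2 ha)]
      omega
    · obtain ⟨hxa, hx⟩ := mem_erase.1 hx
      exact mem_sdiff.2 ⟨hXM x (mem_sdiff.1 hx).1 hxa, (mem_sdiff.1 hx).2⟩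
  have hfM : (f \ M).card ≤ 1 := le_of_not_gt fun hfM =>
    hmin f M ⟨hf, hM, hfM, hMf⟩
      (union_comm e f ▸ union_ssubset_union_of_not_mem (union_comm e f ▸ hMef) ha.1 ha.2 haM)
  -- So `M` contains `(e ∪ f) \ {a, c}`, yet some `x ∈ e \ f` other than `a` has a non-neighbour
  -- in `f \ e` other than `c`.
  obtain ⟨x, hx, hxa⟩ := exists_mem_ne (by omega : 1 < (e \ f).card) a
  obtain ⟨c₁, hc₁, c₂, hc₂, hne, h₁, h₂⟩ := h.exists_two_not_adj he hf hx
  obtain ⟨y, hy, hyc, hxy⟩ : ∃ y ∈ f \ e, y ≠ c ∧ ¬ G.Adj x y := by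
    by_cases hc₁c : c₁ = c
    · exact ⟨c₂, hc₂, hc₁c ▸ hne.symm, h₂⟩
    · exact ⟨c₁, hc₁, hc₁c, h₁⟩
  have hyM : y ∈ M := by
    by_contra hyM
    exact hyc (card_le_one.1 hfM y (mem_sdiff.2 ⟨(mem_sdiff.1 hy).1, hyM⟩) c
      (mem_sdiff.2 ⟨hc.1, hcM⟩))
  exact hxy (hM.1 (hXM x (mem_sdiff.1 hx).1 hxa) hyM
    (ne_of_mem_of_not_mem (mem_sdiff.1 hx).1 (mem_sdiff.1 hy).2))

lemma AvoidsCrossNonEdges.exists_sdiff_eq_singletons [Fintype V] (h : AvoidsCrossNonEdges G e f)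
    (he : e ∈ CliqueHyp G) (hf : f ∈ CliqueHyp G)
    (hmin : ∀ e' f', FarCliquePair G e' f' → ¬ e' ∪ f' ⊂ e ∪ f) (hX : 2 < (e \ f).card)
    (hY : 2 < (f \ e).card) {a c : V} (ha : a ∈ e \ f) (hc : c ∈ f \ e) (hac : ¬ G.Adj a c) :
    ∃ M ∈ CliqueHyp G, M ⊆ e ∪ f ∧ a ∉ M ∧ ∃ a' c', M \ f = {a'} ∧ M \ e = {c'} := by
  obtain ⟨M, hM, hMef, haM, hcM⟩ := h a ha c hc hac
  have hMe := h.card_sdiff_le_one he hf hmin hX ha hc hM hMef haM hcM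
  have hMf := h.symm.card_sdiff_le_one hf he (union_comm e f ▸ hmin) hY hc ha hM
    (union_comm e f ▸ hMef) hcM haM
  obtain ⟨a', ha', -⟩ := exists_mem_sdiff_not_adj hf.1 hM (mem_sdiff.1 hc).1 hcM
  obtain ⟨c', hc', -⟩ := exists_mem_sdiff_not_adj he.1 hM (mem_sdiff.1 ha).1 haM
  exact ⟨M, hM, hMef, haM, a', c', eq_singleton_iff_unique_mem.2 ⟨ha', fun x hx =>
    card_le_one.1 hMf x hx a' ha'⟩, eq_singleton_iff_unique_mem.2 ⟨hc', fun x hx =>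
    card_le_one.1 hMe x hx c' hc'⟩⟩

lemma one_lt_card_sdiff_of_sdiff_eq_singletons {M₁ M₂ : Finset V} (hM₁ : M₁ ⊆ e ∪ f)
    {a₁ c₁ a₂ c₂ : V} (ha₁ : M₁ \ f = {a₁}) (hc₁ : M₁ \ e = {c₁}) (ha₂ : M₂ \ f = {a₂})
    (hc₂ : M₂ \ e = {c₂}) (ha : a₁ ≠ a₂) (hc : c₁ ≠ c₂) : 1 < (M₁ \ M₂).card := by
  obtain ⟨ha₁M₁, ha₁f⟩ := mem_sdiff.1 (ha₁ ▸ mem_singleton_self a₁ : a₁ ∈ M₁ \ f)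
  obtain ⟨hc₁M₁, hc₁e⟩ := mem_sdiff.1 (hc₁ ▸ mem_singleton_self c₁ : c₁ ∈ M₁ \ e)
  refine one_lt_card.2 ⟨a₁, mem_sdiff.2 ⟨ha₁M₁, fun h => ha (eq_of_sdiff_eq_singleton ha₂ h ha₁f)⟩,
    c₁, mem_sdiff.2 ⟨hc₁M₁, fun h => hc (eq_of_sdiff_eq_singleton hc₂ h hc₁e)⟩, ?_⟩
  rintro rfl
  exact (mem_union.1 (hM₁ ha₁M₁)).elim hc₁e ha₁f

lemma AvoidsCrossNonEdges.false_of_two_lt_card [Fintype V] (h : AvoidsCrossNonEdges G e f)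
    (he : e ∈ CliqueHyp G) (hf : f ∈ CliqueHyp G)
    (hmin : ∀ e' f', FarCliquePair G e' f' → ¬ e' ∪ f' ⊂ e ∪ f) (hX : 2 < (e \ f).card)
    (hY : 2 < (f \ e).card) : False := by
  obtain ⟨a, ha⟩ := card_pos.1 (by omega : 0 < (e \ f).card)
  obtain ⟨c, hc, hac⟩ := exists_mem_sdiff_not_adj he.1 hf (mem_sdiff.1 ha).1 (mem_sdiff.1 ha).2
  obtain ⟨M₁, hM₁, hM₁ef, -, a₁, c₁, ha₁, hc₁⟩ :=
    h.exists_sdiff_eq_singletons he hf hmin hX hY ha hc hac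
  have ha₁X : a₁ ∈ e \ f :=
    sdiff_subset_sdiff_of_subset_union (union_comm e f ▸ hM₁ef) (ha₁ ▸ mem_singleton_self a₁)
  -- `a₁` and `c₁` have no neighbours across `e, f` besides each other.
  obtain ⟨y, hy, hyc₁⟩ := exists_mem_ne (by omega : 1 < (f \ e).card) c₁
  have ha₁y : ¬ G.Adj a₁ y := fun ha₁y => not_adj_of_sdiff_eq_singleton hf.1 hM₁ ha₁
    (mem_sdiff.1 hy).1 (fun hyM₁ => hyc₁ (eq_of_sdiff_eq_singleton hc₁ hyM₁ (mem_sdiff.1 hy).2))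
    ha₁y.symm
  obtain ⟨M₂, hM₂, hM₂ef, ha₁M₂, a₂, c₂, ha₂, hc₂⟩ :=
    h.exists_sdiff_eq_singletons he hf hmin hX hY ha₁X hy ha₁y
  obtain ⟨ha₂M₂, ha₂f⟩ := mem_sdiff.1 (ha₂ ▸ mem_singleton_self a₂ : a₂ ∈ M₂ \ f)
  have ha₂e : a₂ ∈ e := (mem_union.1 (hM₂ef ha₂M₂)).resolve_right ha₂f
  have ha₁₂ : a₁ ≠ a₂ := fun h' => ha₁M₂ (h' ▸ ha₂M₂)
  have hc₁₂ : c₁ ≠ c₂ := by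
    rintro rfl
    obtain ⟨hc₁M₂, hc₁e⟩ := mem_sdiff.1 (hc₂ ▸ mem_singleton_self c₁ : c₁ ∈ M₂ \ e)
    exact not_adj_of_sdiff_eq_singleton he.1 hM₁ hc₁ ha₂e
      (fun h' => ha₁₂ (eq_of_sdiff_eq_singleton ha₁ h' ha₂f).symm)
      (hM₂.1 ha₂M₂ hc₁M₂ (ne_of_mem_of_not_mem ha₂e hc₁e))
  -- `M₁ ∪ M₂` misses every vertex of `e \ f` other than `a₁` and `a₂`.
  obtain ⟨x, hx, hxa₂⟩ := exists_mem_ne (s := (e \ f).erase a₁)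
    (by rw [card_erase_of_mem ha₁X]; omega) a₂
  obtain ⟨hxa₁, hxe, hxf⟩ := And.imp_right mem_sdiff.1 (mem_erase.1 hx)
  refine hmin M₁ M₂ ⟨hM₁, hM₂,
    one_lt_card_sdiff_of_sdiff_eq_singletons hM₁ef ha₁ hc₁ ha₂ hc₂ ha₁₂ hc₁₂,
    one_lt_card_sdiff_of_sdiff_eq_singletons hM₂ef ha₂ hc₂ ha₁ hc₁ ha₁₂.symm hc₁₂.symm⟩
    ((ssubset_iff_of_subset (union_subset hM₁ef hM₂ef)).2 ⟨x, mem_union_left f hxe, ?_⟩)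
  rw [mem_union, not_or]
  exact ⟨fun hxM₁ => hxa₁ (eq_of_sdiff_eq_singleton ha₁ hxM₁ hxf),
    fun hxM₂ => hxa₂ (eq_of_sdiff_eq_singleton ha₂ hxM₂ hxf)⟩

theorem not_farCliquePair_of_twoAsummable [Fintype V] (h2 : TwoAsummable (CliqueHyp G))
    (e f : Finset V) : ¬ FarCliquePair G e f := by
  intro hef
  obtain ⟨s, hs⟩ : ∃ s, e ∪ f = s := ⟨_, rfl⟩
  induction s using Finset.strongInduction generalizing e f with
  | H s ih =>
    have hmin : ∀ e' f', FarCliquePair G e' f' → ¬ e' ∪ f' ⊂ e ∪ f :=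
      fun e' f' h' hss => ih _ (hs ▸ hss) e' f' h' rfl
    have h := avoidsCrossNonEdges_of_twoAsummable h2 hef
    obtain ⟨he, hf, hX, hY⟩ := hef
    rcases (by omega : (f \ e).card = 2 ∨ (e \ f).card = 2 ∨ (2 < (e \ f).card ∧ 2 < (f \ e).card))
      with hY2 | hX2 | ⟨hX3, hY3⟩
    · exact h.false_of_card_eq_two he hf (card_pos.1 (by omega)) hY2
    · exact h.symm.false_of_card_eq_two hf he (card_pos.1 (by omega)) hX2
    · exact h.false_of_two_lt_card he hf hmin hX3 hY3

end TwoAsummable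

theorem stmt1 {V : Type*} [Fintype V] [DecidableEq V] (G : SimpleGraph V) :
    [ThresholdGraph G, OneSperner (CliqueHyp G), HypThreshold (CliqueHyp G),
      TwoAsummable (CliqueHyp G)].TFAE := by
  tfae_have 1 → 2 := fun h =>
    oneSperner_cliqueHyp_iff.2 h.altFourCycleFree.not_farCliquePair
  tfae_have 2 → 3 := fun h =>
    (altFourCycleFree_of_forall_not_farCliquePair (oneSperner_cliqueHyp_iff.1 h)).hypThreshold
  tfae_have 3 → 4 := HypThreshold.twoAsummable
  tfae_have 4 → 2 := fun h => oneSperner_cliqueHyp_iff.2 (not_farCliquePair_of_twoAsummable h)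
  tfae_have 2 → 1 := fun h =>
    (altFourCycleFree_of_forall_not_farCliquePair (oneSperner_cliqueHyp_iff.1 h)).thresholdGraph
  tfae_finish
end

section
/- Let G be a finite simple graph, let A and B be inclusion-maximal cliques of G, let a ∈ A∖B and b ∈ B∖A, and suppose a and b are adjacent in G. Then the set (A∖{a}) ∪ {b} contains no inclusion-maximal clique of G (that is, it is an independent set of the clique hypergraph C(G)). -/
open Finset

open scoped Classical

theorem mem_of_mem_cliqueHyp_of_forall_adj {V : Type*} [DecidableEq V] {G : SimpleGraph V}
    {C : Finset V} (hC : C ∈ CliqueHyp G) {a : V} (ha : ∀ c ∈ C, a ≠ c → G.Adj a c) :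
    a ∈ C := by
  have hclique : G.IsClique (insert a C : Finset V) := by
    rw [coe_insert]
    exact hC.1.insert ha
  rw [← hC.2 _ hclique (subset_insert a C)]
  exact mem_insert_self a C

theorem stmt2_general {V : Type*} [DecidableEq V] (G : SimpleGraph V)
    (A B : Finset V) (hA : A ∈ CliqueHyp G)
    (a b : V) (ha : a ∈ A \ B) (hab : G.Adj a b) :
    ¬ HypDep (CliqueHyp G) (insert b (A.erase a)) := by
  rintro ⟨C, hC, hCsub⟩
  -- Every vertex of `C` other than `a` is `b` or lies in the clique `A`, so `a` extends `C`.
  have haC : a ∈ C := mem_of_mem_cliqueHyp_of_forall_adj hC fun c hc hac => by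
    rcases mem_insert.1 (hCsub hc) with rfl | hcA
    · exact hab
    · exact hA.1 (mem_sdiff.1 ha).1 (mem_of_mem_erase hcA) hac
  rcases mem_insert.1 (hCsub haC) with hab' | haA
  · exact hab.ne hab'
  · exact notMem_erase a A haA

theorem stmt2 {V : Type*} [Fintype V] [DecidableEq V] (G : SimpleGraph V)
    (A B : Finset V) (hA : A ∈ CliqueHyp G) (hB : B ∈ CliqueHyp G)
    (a b : V) (ha : a ∈ A \ B) (hb : b ∈ B \ A) (hab : G.Adj a b) :
    ¬ HypDep (CliqueHyp G) (insert b (A.erase a)) :=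
  stmt2_general G A B hA a b ha hab
end

section
/- Let G be a finite simple graph whose clique hypergraph C(G) is 2-asummable, let A and B be inclusion-maximal cliques of G, and let a ∈ A∖B and b ∈ B∖A. Then a and b are not adjacent in G. -/
/-!
If `a ∈ A \ B` and `b ∈ B \ A` were adjacent, exchange them: `A - a + b` and `B - b + a` have
the same characteristic-vector sum as `A` and `B`. Neither contains a maximal clique `C`: such a
`C` avoids `a`, so either it avoids `b`, lies in `A` and hence equals `A ∋ a`, or it contains `b`
and extends by `a`, since `a` is adjacent to `b` and to the rest of `A`. This contradicts
2-asummability.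
-/

open Finset

open scoped Classical

section CliqueExchange

variable {V : Type*} [DecidableEq V] {G : SimpleGraph V} {A B C : Finset V} {a b : V}

lemma isClique_insert_of_subset_insert_erase (hA : G.IsClique (A : Set V)) (haA : a ∈ A)
    (hab : G.Adj a b) (hC : G.IsClique (C : Set V)) (hCsub : C ⊆ insert b (A.erase a)) :
    G.IsClique (insert a C : Set V) := by
  refine SimpleGraph.isClique_insert.2 ⟨hC, fun c hc hac => ?_⟩
  rcases mem_insert.mp (hCsub hc) with rfl | hcA
  · exact hab
  · exact hA haA (mem_erase.mp hcA).2 hac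

lemma not_hypDep_cliqueHyp_insert_erase (hA : A ∈ CliqueHyp G) (haA : a ∈ A) (hbA : b ∉ A)
    (hab : G.Adj a b) : ¬ HypDep (CliqueHyp G) (insert b (A.erase a)) := by
  rintro ⟨C, ⟨hC, hCmax⟩, hCsub⟩
  have haC : a ∉ C := fun h => by simpa [hab.ne] using hCsub h
  by_cases hbC : b ∈ C
  · have hInsert : G.IsClique ((insert a C : Finset V) : Set V) := by
      exact_mod_cast isClique_insert_of_subset_insert_erase hA.1 haA hab hC hCsub
    exact haC (hCmax _ hInsert (subset_insert a C) ▸ mem_insert_self a C)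
  · have hCA : C ⊆ A := fun x hx =>
      (mem_erase.mp ((mem_insert.mp (hCsub hx)).resolve_left (by rintro rfl; exact hbC hx))).2
    exact haC (hCmax A hA.1 hCA ▸ haA)

lemma chiVec_insert_erase_add_chiVec_insert_erase (ha : a ∈ A \ B) (hb : b ∈ B \ A) (v : V) :
    chiVec (insert b (A.erase a)) v + chiVec (insert a (B.erase b)) v =
      chiVec A v + chiVec B v := by
  rw [mem_sdiff] at ha hb
  unfold chiVec
  by_cases hva : v = a
  · subst hva; simp [ha.1, ha.2, ne_of_mem_of_not_mem ha.1 hb.2]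
  by_cases hvb : v = b
  · subst hvb; simp [hb.1, hb.2, hva]
  · simp [hva, hvb]

end CliqueExchange

theorem stmt3_general {V : Type*} [DecidableEq V] (G : SimpleGraph V)
    (h2as : TwoAsummable (CliqueHyp G))
    (A B : Finset V) (hA : A ∈ CliqueHyp G) (hB : B ∈ CliqueHyp G)
    (a b : V) (ha : a ∈ A \ B) (hb : b ∈ B \ A) :
    ¬ G.Adj a b := by
  intro hab
  obtain ⟨haA, haB⟩ := mem_sdiff.mp ha
  obtain ⟨hbB, hbA⟩ := mem_sdiff.mp hb
  exact h2as ⟨insert b (A.erase a), insert a (B.erase b), A, B,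
    not_hypDep_cliqueHyp_insert_erase hA haA hbA hab,
    not_hypDep_cliqueHyp_insert_erase hB hbB haB hab.symm,
    ⟨A, hA, subset_rfl⟩, ⟨B, hB, subset_rfl⟩,
    chiVec_insert_erase_add_chiVec_insert_erase ha hb⟩

theorem stmt3 {V : Type*} [Fintype V] [DecidableEq V] (G : SimpleGraph V)
    (h2as : TwoAsummable (CliqueHyp G))
    (A B : Finset V) (hA : A ∈ CliqueHyp G) (hB : B ∈ CliqueHyp G)
    (a b : V) (ha : a ∈ A \ B) (hb : b ∈ B \ A) :
    ¬ G.Adj a b :=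
  stmt3_general G h2as A B hA hB a b ha hb
end

section
/- Let G be a finite simple graph whose clique hypergraph C(G) is 2-asummable, let A and B be inclusion-maximal cliques of G, and let a ∈ A∖B and b ∈ B∖A. Then the set (A ∪ B)∖{a, b} contains no inclusion-maximal clique of G (that is, it is an independent set of the clique hypergraph C(G)). -/
open Finset

open scoped Classical

/-!
A maximal clique `C ⊆ (A ∪ B) \ {a, b}` differs from `A` (it misses `a`) and from `B` (it misses
`b`), so it contains some `u ∈ A \ B` and some `v ∈ B \ A`, and `u, v` are adjacent. Exchanging
`u` and `v` turns `A, B` into `A - u + v` and `B - v + u`, with the same sum of characteristic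
vectors. Both are independent in `C(G)`: every vertex of `A - u + v` is adjacent to
`u ∉ A - u + v`, so any maximal clique inside it could be extended by `u`.
This contradicts 2-asummability.
-/

theorem not_subset_of_mem_cliqueHyp {V : Type*} {G : SimpleGraph V} {A C : Finset V}
    (hC : C ∈ CliqueHyp G) (hA : G.IsClique (A : Set V)) {a : V} (ha : a ∈ A) (haC : a ∉ C) :
    ¬ C ⊆ A :=
  fun h => haC (hC.2 A hA h ▸ ha)

section CliqueHyp

variable {V : Type*} [DecidableEq V] {G : SimpleGraph V}

theorem not_hypDep_cliqueHyp_of_forall_adj {X : Finset V} {u : V} (hu : u ∉ X)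
    (hadj : ∀ x ∈ X, G.Adj u x) : ¬ HypDep (CliqueHyp G) X := by
  rintro ⟨C, hC, hCX⟩
  have hclique : G.IsClique ((insert u C : Finset V) : Set V) := by
    rw [coe_insert]
    exact hC.1.insert fun x hx _ => hadj x (hCX hx)
  have hCu : insert u C = C := hC.2 _ hclique (subset_insert u C)
  exact hu (hCX (hCu ▸ mem_insert_self u C))

theorem not_hypDep_cliqueHyp_insert_erase_s4 {A : Finset V} (hA : G.IsClique (A : Set V))
    {u v : V} (hu : u ∈ A) (huv : G.Adj u v) :
    ¬ HypDep (CliqueHyp G) (insert v (A.erase u)) := by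
  refine not_hypDep_cliqueHyp_of_forall_adj (u := u) (by simp [huv.ne]) fun x hx => ?_
  rcases mem_insert.mp hx with rfl | hx
  · exact huv
  · exact hA hu (mem_of_mem_erase hx) (ne_of_mem_erase hx).symm

end CliqueHyp

theorem chiVec_insert_erase_add_chiVec_insert_erase_s4 {V : Type*} [DecidableEq V]
    {A B : Finset V} {u v : V} (huA : u ∈ A) (huB : u ∉ B) (hvB : v ∈ B) (hvA : v ∉ A)
    (w : V) :
    chiVec (insert v (A.erase u)) w + chiVec (insert u (B.erase v)) w =
      chiVec A w + chiVec B w := by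
  by_cases hwu : w = u
  · subst hwu
    simp [chiVec, huA, huB, ne_of_mem_of_not_mem huA hvA]
  by_cases hwv : w = v
  · subst hwv
    simp [chiVec, hvA, hvB, hwu]
  simp [chiVec, hwu, hwv]

theorem stmt4_general {V : Type*} [DecidableEq V] (G : SimpleGraph V)
    (h2as : TwoAsummable (CliqueHyp G))
    (A B : Finset V) (hA : A ∈ CliqueHyp G) (hB : B ∈ CliqueHyp G)
    (a b : V) (ha : a ∈ A \ B) (hb : b ∈ B \ A) :
    ¬ HypDep (CliqueHyp G) ((A ∪ B) \ {a, b}) := by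
  rintro ⟨C, hC, hCsub⟩
  have hCAB : C ⊆ A ∪ B := hCsub.trans sdiff_subset
  have haC : a ∉ C := fun h => (mem_sdiff.mp (hCsub h)).2 (by simp)
  have hbC : b ∉ C := fun h => (mem_sdiff.mp (hCsub h)).2 (by simp)
  obtain ⟨u, huC, huB⟩ :=
    not_subset.mp (not_subset_of_mem_cliqueHyp hC hB.1 (mem_sdiff.mp hb).1 hbC)
  obtain ⟨v, hvC, hvA⟩ :=
    not_subset.mp (not_subset_of_mem_cliqueHyp hC hA.1 (mem_sdiff.mp ha).1 haC)
  have huA : u ∈ A := (mem_union.mp (hCAB huC)).resolve_right huB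
  have hvB : v ∈ B := (mem_union.mp (hCAB hvC)).resolve_left hvA
  have huv : G.Adj u v := hC.1 huC hvC (ne_of_mem_of_not_mem hvB huB).symm
  exact h2as ⟨_, _, A, B, not_hypDep_cliqueHyp_insert_erase_s4 hA.1 huA huv,
    not_hypDep_cliqueHyp_insert_erase_s4 hB.1 hvB huv.symm, ⟨A, hA, subset_rfl⟩,
    ⟨B, hB, subset_rfl⟩,
    chiVec_insert_erase_add_chiVec_insert_erase_s4 huA huB hvB hvA⟩

theorem stmt4 {V : Type*} [Fintype V] [DecidableEq V] (G : SimpleGraph V)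
    (h2as : TwoAsummable (CliqueHyp G))
    (A B : Finset V) (hA : A ∈ CliqueHyp G) (hB : B ∈ CliqueHyp G)
    (a b : V) (ha : a ∈ A \ B) (hb : b ∈ B \ A) :
    ¬ HypDep (CliqueHyp G) ((A ∪ B) \ {a, b}) :=
  stmt4_general G h2as A B hA hB a b ha hb
end

section
/- A finite simple graph G is a threshold graph if and only if G is isomorphic to the co-occurrence graph of some 1-Sperner hypergraph. -/
open Finset

open scoped Classical

/-!
A graph is threshold exactly when its vicinal preorder, `u ≼ v ↔ N(u) ⊆ N[v]`, is total.
If it is total, every nonempty vertex set has a `≼`-greatest vertex, which is isolated or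
dominating in it, so weights can be built by adding the vertices one at a time. Conversely,
comparing the pairs `{u, x}` and `{v, x}` shows that `w u ≤ w v` forces `u ≼ v`.

Two `≼`-incomparable vertices `u, v` of a co-occurrence graph yield hyperedges `e ∋ u, x` and
`f ∋ v, y` with `{u, x} ⊆ e \ f` and `{v, y} ⊆ f \ e`, which 1-Sperner forbids. Conversely, the
maximal cliques of a threshold graph form a 1-Sperner hypergraph with the graph as co-occurrence
graph: if two maximal cliques differed in at least two vertices on each side, the heaviest vertex
of their symmetric difference would extend the clique missing it.
-/

namespace SimpleGraph

variable {V : Type*} (G : SimpleGraph V)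

def VicinalLE (u v : V) : Prop :=
  G.neighborSet u ⊆ insert v (G.neighborSet v)

def IsVicinallyTotal : Prop :=
  ∀ u v, G.VicinalLE u v ∨ G.VicinalLE v u

variable {G}

theorem VicinalLE.eq_or_adj {u v x : V} (h : G.VicinalLE u v) (hx : G.Adj u x) :
    x = v ∨ G.Adj v x :=
  h hx

theorem vicinalLE_refl (v : V) : G.VicinalLE v v :=
  Set.subset_insert _ _

theorem VicinalLE.trans {u v w : V} (huv : G.VicinalLE u v) (hvw : G.VicinalLE v w) :
    G.VicinalLE u w := by
  intro x hux
  rcases huv.eq_or_adj hux with rfl | hvx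
  · rcases hvw.eq_or_adj hux.symm with rfl | hwu
    · exact Or.inr hux
    · rcases huv.eq_or_adj hwu.symm with rfl | hxw
      · exact Or.inl rfl
      · exact Or.inr hxw.symm
  · exact hvw hvx

instance : IsTrans V G.VicinalLE := ⟨fun _ _ _ => VicinalLE.trans⟩

theorem IsVicinallyTotal.exists_forall_vicinalLE (hG : G.IsVicinallyTotal) {s : Finset V}
    (hs : s.Nonempty) : ∃ v ∈ s, ∀ u ∈ s, G.VicinalLE u v := by
  have : Nonempty s := hs.to_subtype
  have hdir : Directed G.VicinalLE (Subtype.val : s → V) := fun x y =>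
    (hG x y).elim (fun h => ⟨y, h, vicinalLE_refl _⟩) fun h => ⟨x, vicinalLE_refl _, h⟩
  obtain ⟨⟨v, hv⟩, hmax⟩ := hdir.finite_le (id : s → s)
  exact ⟨v, hv, fun u hu => hmax ⟨u, hu⟩⟩

theorem IsVicinallyTotal.exists_isolated_or_dominating [DecidableEq V]
    (hG : G.IsVicinallyTotal) {s : Finset V} (hs : s.Nonempty) :
    ∃ v ∈ s, (∀ x ∈ s, ¬ G.Adj v x) ∨ ∀ x ∈ s.erase v, G.Adj v x := by
  by_cases hiso : ∃ v ∈ s, ∀ x ∈ s, ¬ G.Adj v x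
  · obtain ⟨v, hv, hvs⟩ := hiso
    exact ⟨v, hv, Or.inl hvs⟩
  push Not at hiso
  obtain ⟨v, hv, htop⟩ := hG.exists_forall_vicinalLE hs
  refine ⟨v, hv, Or.inr fun u hu => ?_⟩
  obtain ⟨huv, hu⟩ := Finset.mem_erase.1 hu
  obtain ⟨y, hy, huy⟩ := hiso u hu
  -- a neighbour `y` of `u` lies in `N[v]`, and then `u ∈ N(y) ⊆ N[v]`
  rcases (htop u hu).eq_or_adj huy with rfl | hvy
  · exact huy.symm
  · exact ((htop y hy).eq_or_adj huy.symm).resolve_left huv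

variable (G) in
def IsThresholdOn (s : Finset V) (w : V → ℕ) (t : ℕ) : Prop :=
  ∀ X ⊆ s, (∑ x ∈ X, w x ≤ t ↔ ∀ u ∈ X, ∀ v ∈ X, ¬ G.Adj u v)

theorem thresholdGraph_iff [Fintype V] : ThresholdGraph G ↔ ∃ w t, G.IsThresholdOn univ w t := by
  simp [ThresholdGraph, IsThresholdOn]

theorem IsThresholdOn.vicinalLE_of_le [Fintype V] {w : V → ℕ} {t : ℕ}
    (h : G.IsThresholdOn univ w t) {u v : V} (huv : w u ≤ w v) : G.VicinalLE u v := by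
  intro x hux
  by_contra hx
  simp only [Set.mem_insert_iff, mem_neighborSet, not_or] at hx
  have hdep : ¬ w u + w x ≤ t := by
    rw [← sum_pair (G.ne_of_adj hux), h _ (subset_univ _)]
    exact fun hind => hind u (by simp) x (by simp) hux
  have hindep : w v + w x ≤ t := by
    rw [← sum_pair (Ne.symm hx.1), h _ (subset_univ _)]
    simpa [hx.2] using fun hxv : G.Adj x v => hx.2 hxv.symm
  omega

section Weights

variable [DecidableEq V]

theorem forall_not_adj_insert {v : V} {Y : Finset V} :
    (∀ a ∈ insert v Y, ∀ b ∈ insert v Y, ¬ G.Adj a b) ↔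
      (∀ b ∈ Y, ¬ G.Adj v b) ∧ ∀ a ∈ Y, ∀ b ∈ Y, ¬ G.Adj a b := by
  simp only [Finset.forall_mem_insert, G.loopless.irrefl, not_false_eq_true, true_and]
  exact ⟨fun h => ⟨h.1, fun a ha => (h.2 a ha).2⟩,
    fun h => ⟨h.1, fun a ha => ⟨fun hav => h.1 a ha hav.symm, h.2 a ha⟩⟩⟩

/-- Doubling the old weights makes room for the new vertex: a set avoiding `v` keeps its
status, and the status of a set `insert v Y` is prescribed by `hc`. -/
theorem isThresholdOn_insert {s : Finset V} {w : V → ℕ} {t c : ℕ} {v : V}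
    (h : G.IsThresholdOn s w t)
    (hc : ∀ Y ⊆ s, (c + 2 * ∑ x ∈ Y, w x ≤ 2 * t + 1 ↔
      ∀ a ∈ insert v Y, ∀ b ∈ insert v Y, ¬ G.Adj a b)) :
    G.IsThresholdOn (insert v s) (Function.update (fun x => 2 * w x) v c) (2 * t + 1) := by
  intro X hX
  by_cases hvX : v ∈ X
  · have hY : X.erase v ⊆ s := Finset.subset_insert_iff.1 hX
    rw [← Finset.insert_erase hvX, Finset.sum_insert (Finset.notMem_erase v X),
      Function.update_self, Finset.sum_update_of_notMem (Finset.notMem_erase v X),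
      ← Finset.mul_sum]
    exact hc _ hY
  · have hXs : X ⊆ s := (Finset.subset_insert_iff_of_notMem hvX).1 hX
    rw [Finset.sum_update_of_notMem hvX, ← Finset.mul_sum, ← h X hXs]
    omega

theorem isThresholdOn_insert_of_isolated {s : Finset V} {w : V → ℕ} {t : ℕ} {v : V}
    (h : G.IsThresholdOn s w t) (hiso : ∀ x ∈ s, ¬ G.Adj v x) :
    G.IsThresholdOn (insert v s) (Function.update (fun x => 2 * w x) v 1) (2 * t + 1) := by
  refine isThresholdOn_insert h fun Y hY => ?_
  rw [forall_not_adj_insert, ← h Y hY]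
  exact ⟨fun hle => ⟨fun b hb => hiso b (hY hb), by omega⟩, fun hle => by omega⟩

theorem isThresholdOn_insert_of_dominating {s : Finset V} {w : V → ℕ} {t : ℕ} {v : V}
    (h : G.IsThresholdOn s w t) (hpos : ∀ x ∈ s, 0 < w x)
    (hdom : ∀ x ∈ s, G.Adj v x) :
    G.IsThresholdOn (insert v s) (Function.update (fun x => 2 * w x) v (2 * t + 1))
      (2 * t + 1) := by
  refine isThresholdOn_insert h fun Y hY => ?_
  rw [forall_not_adj_insert]
  have hsum : ∑ x ∈ Y, w x = 0 ↔ Y = ∅ := by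
    rw [Finset.sum_eq_zero_iff, ← Finset.not_nonempty_iff_eq_empty]
    exact ⟨fun h0 ⟨x, hx⟩ => (hpos x (hY hx)).ne' (h0 x hx), fun hY0 x hx => (hY0 ⟨x, hx⟩).elim⟩
  constructor
  · intro hle
    have hY0 : Y = ∅ := hsum.1 (by omega)
    simp [hY0]
  · rintro ⟨hY0, -⟩
    obtain rfl : Y = ∅ := Finset.eq_empty_of_forall_notMem fun x hx => hY0 x hx (hdom x (hY hx))
    simp

theorem IsVicinallyTotal.exists_isThresholdOn (hG : G.IsVicinallyTotal) (s : Finset V) :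
    ∃ w t, (∀ x ∈ s, 0 < w x) ∧ G.IsThresholdOn s w t := by
  induction s using Finset.strongInduction with
  | H s ih =>
  rcases s.eq_empty_or_nonempty with rfl | hs
  · exact ⟨fun _ => 1, 0, by simp, fun X hX => by simp [Finset.subset_empty.1 hX]⟩
  obtain ⟨v, hv, hiso | hdom⟩ := hG.exists_isolated_or_dominating hs
  all_goals
    obtain ⟨w, t, hpos, h⟩ := ih _ (Finset.erase_ssubset hv)
    rw [← Finset.insert_erase hv]
    have hpos' : ∀ c, 0 < c → ∀ x ∈ insert v (s.erase v),
        0 < Function.update (fun x => 2 * w x) v c x := by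
      intro c hc x hx
      rcases eq_or_ne x v with rfl | hxv
      · simpa using hc
      · simpa [hxv] using hpos x ((Finset.mem_insert.1 hx).resolve_left hxv)
  · exact ⟨_, _, hpos' 1 one_pos,
      isThresholdOn_insert_of_isolated h fun x hx => hiso x (Finset.mem_of_mem_erase hx)⟩
  · exact ⟨_, _, hpos' _ (Nat.succ_pos _),
      isThresholdOn_insert_of_dominating h hpos hdom⟩

theorem IsVicinallyTotal.thresholdGraph [Fintype V] (hG : G.IsVicinallyTotal) :
    ThresholdGraph G := by
  obtain ⟨w, t, -, h⟩ := hG.exists_isThresholdOn univ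
  exact thresholdGraph_iff.2 ⟨w, t, h⟩

end Weights

end SimpleGraph

open SimpleGraph

theorem ThresholdGraph.of_iso {V W : Type*} [Fintype V] [Fintype W] {G : SimpleGraph V}
    {H : SimpleGraph W} (h : ThresholdGraph H) (φ : G ≃g H) : ThresholdGraph G := by
  obtain ⟨w, t, h⟩ := h
  refine ⟨w ∘ φ, t, fun X => ?_⟩
  simpa only [sum_map, forall_mem_map, Equiv.coe_toEmbedding, RelIso.coe_fn_toEquiv,
    Function.comp_apply, φ.map_adj_iff] using h (X.map φ.toEquiv.toEmbedding)

section CoOccurrence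

variable {W : Type*} {E : Set (Finset W)}

theorem isVicinallyTotal_coOccurrenceGraph [DecidableEq W] (hE : OneSperner E) :
    (coOccurrenceGraph E).IsVicinallyTotal := by
  intro u v
  by_contra! h
  obtain ⟨x, ⟨hux, e, he, hue, hxe⟩, hx⟩ := Set.not_subset.1 h.1
  obtain ⟨y, ⟨hvy, f, hf, hvf, hyf⟩, hy⟩ := Set.not_subset.1 h.2
  have hedge : ∀ g ∈ E, ∀ a ∈ g, ∀ b ∈ g, a ∈ insert b ((coOccurrenceGraph E).neighborSet b) :=
    fun g hg a ha b hb => or_iff_not_imp_left.2 fun hab => ⟨Ne.symm hab, g, hg, hb, ha⟩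
  have hue_f : {u, x} ⊆ e \ f := by
    simp only [insert_subset_iff, singleton_subset_iff, mem_sdiff]
    exact ⟨⟨hue, fun hu => hy (hedge f hf y hyf u hu)⟩, hxe, fun hx' => hx (hedge f hf x hx' v hvf)⟩
  have hvf_e : {v, y} ⊆ f \ e := by
    simp only [insert_subset_iff, singleton_subset_iff, mem_sdiff]
    exact ⟨⟨hvf, fun hv => hx (hedge e he x hxe v hv)⟩, hyf, fun hy' => hy (hedge e he y hy' u hue)⟩
  have hef : e ≠ f := fun hef => (mem_sdiff.1 (hue_f (mem_insert_self u {x}))).2 (hef ▸ hue)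
  have h1 := card_le_card hue_f
  have h2 := card_le_card hvf_e
  rw [card_pair hux] at h1
  rw [card_pair hvy] at h2
  have := hE e he f hf hef
  omega

end CoOccurrence

section CliqueHypergraph

variable {V : Type*} [Fintype V] {G : SimpleGraph V}

theorem coOccurrenceGraph_cliqueHyp (G : SimpleGraph V) : coOccurrenceGraph (CliqueHyp G) = G := by
  ext u v
  constructor
  · rintro ⟨huv, e, he, hu, hv⟩
    exact he.1 hu hv huv
  · intro h
    obtain ⟨T, hsub, hT, hmax⟩ := Finite.exists_le_maximal
      (p := fun T : Finset V => G.IsClique (T : Set V)) (a := {u, v}) (by simp [h])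
    exact ⟨h.ne, T, ⟨hT, fun T' hT' hle => subset_antisymm (hmax hT' hle) hle⟩,
      hsub (by simp), hsub (by simp)⟩

theorem isClique_insert_of_weight_le {w : V → ℕ} {t : ℕ} (h : G.IsThresholdOn univ w t)
    {e f : Finset V} (he : G.IsClique (e : Set V)) (hf : G.IsClique (f : Set V))
    (hef : 1 < #(e \ f)) {v : V} (hv : v ∈ f) (hmax : ∀ z ∈ e \ f, w z ≤ w v) :
    G.IsClique ((insert v e : Finset V) : Set V) := by
  rw [coe_insert, isClique_insert]
  refine ⟨he, fun c hc hvc => ?_⟩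
  by_cases hcf : c ∈ f
  · exact hf hv hcf hvc
  obtain ⟨u, hu, huc⟩ := exists_mem_ne hef c
  exact ((h.vicinalLE_of_le (hmax u hu)).eq_or_adj
    (he (mem_sdiff.1 hu).1 hc huc)).resolve_left (Ne.symm hvc)

theorem oneSperner_cliqueHyp (hG : ThresholdGraph G) :
    OneSperner (CliqueHyp G) := by
  obtain ⟨w, t, h⟩ := thresholdGraph_iff.1 hG
  have hpos : ∀ e ∈ CliqueHyp G, ∀ f ∈ CliqueHyp G, e ≠ f → 0 < #(e \ f) :=
    fun e he f hf hef => card_pos.2 (sdiff_nonempty.2 fun hsub => hef (he.2 f hf.1 hsub).symm)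
  -- a heaviest vertex of `f \ e` would extend the maximal clique `e`
  have hext : ∀ e ∈ CliqueHyp G, ∀ f ∈ CliqueHyp G, 1 < #(e \ f) →
      ∀ v ∈ f \ e, ¬ ∀ z ∈ e \ f, w z ≤ w v := by
    intro e he f hf hef v hv hmax
    have hve := he.2 _ (isClique_insert_of_weight_le h he.1 hf.1 hef (mem_sdiff.1 hv).1 hmax)
      (by simp [subset_insert])
    exact (mem_sdiff.1 hv).2 (by simpa [hve] using mem_insert_self v e)
  intro e he f hf hef
  have h1 := hpos e he f hf hef
  have h2 := hpos f hf e he hef.symm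
  by_contra hmin
  obtain ⟨v, hv, hvmax⟩ := (e \ f ∪ f \ e).exists_max_image w
    ((card_pos.1 h1).mono subset_union_left)
  rcases mem_union.1 hv with hv | hv
  · exact hext f hf e he (by omega) v hv fun z hz => hvmax z (mem_union_right _ hz)
  · exact hext e he f hf (by omega) v hv fun z hz => hvmax z (mem_union_left _ hz)

end CliqueHypergraph

theorem stmt5_general {V : Type*} [Fintype V] (G : SimpleGraph V) :
    ThresholdGraph G ↔
      ∃ (W : Type*) (_ : Fintype W) (E : Set (Finset W)),
        OneSperner E ∧ Nonempty (G ≃g coOccurrenceGraph E) := by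
  constructor
  · intro hG
    let ψ : V ≃ ULift (Fin (Fintype.card V)) := (Fintype.equivFin V).trans Equiv.ulift.symm
    let φ : G ≃g G.map ψ.toEmbedding := Iso.map ψ G
    refine ⟨_, inferInstance, CliqueHyp (G.map ψ.toEmbedding), oneSperner_cliqueHyp
      (hG.of_iso φ.symm), ?_⟩
    rw [coOccurrenceGraph_cliqueHyp]
    exact ⟨φ⟩
  · rintro ⟨W, _, E, hE, ⟨φ⟩⟩
    exact (isVicinallyTotal_coOccurrenceGraph hE).thresholdGraph.of_iso φ

theorem stmt5 {V : Type*} [Fintype V] [DecidableEq V] (G : SimpleGraph V) :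
    ThresholdGraph G ↔
      ∃ (W : Type*) (_ : Fintype W) (E : Set (Finset W)),
        OneSperner E ∧ Nonempty (G ≃g coOccurrenceGraph E) :=
  stmt5_general G
end

section
/- Let G be a finite simple split graph having a split partition (K, I) such that the labeled split graph (G, K, I) is clique-Sperner. Then: (i) if G has no edges, then |K| ≤ 1; (ii) if G has exactly one edge, then K = {v} for some non-isolated vertex v of G; and (iii) if G has at least two edges, then (K, I) is the unique split partition of G such that I is a maximal independent set of G. -/
open Finset

open scoped Classical

/-!
By clique-Sperner, a vertex `x ∈ K` with no neighbour in `I` is the only vertex of `K`; an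
edge would then join `x` to a vertex outside `I`, that is, to `x` itself. So once `G` has an
edge, every clique vertex has a neighbour in `I`: this makes `I` maximal independent, and with
a single edge `xw` a second clique vertex `u` would give the second edge `ux`.
For the uniqueness, a vertex `x ∈ K ∩ I'` of another split partition `(K', I')` has all its
neighbours in `K'`; clique-Sperner then forces `K = {x}`, so every edge joins `x` to the set
`K' ∩ I`, which has at most one vertex. With two edges this is impossible, so `K ⊆ K'`, and
maximality of `I'` gives `I' = I`.
-/

section SplitGraph

variable {V : Type*} {G : SimpleGraph V}

theorem card_inter_le_one_of_isClique [DecidableEq V] {K I : Finset V}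
    (hK : G.IsClique (K : Set V)) (hI : ∀ u ∈ I, ∀ v ∈ I, ¬ G.Adj u v) : #(K ∩ I) ≤ 1 := by
  refine Finset.card_le_one.2 fun a ha b hb => ?_
  rw [Finset.mem_inter] at ha hb
  by_contra hab
  exact hI a ha.2 b hb.2 (hK ha.1 hb.1 hab)

namespace IsSplitPartition

variable [Fintype V] {K I : Finset V}

theorem isCompl (h : IsSplitPartition G K I) : IsCompl K I :=
  ⟨h.1, codisjoint_iff.2 h.2.1⟩

theorem mem_or_mem (h : IsSplitPartition G K I) (v : V) : v ∈ K ∨ v ∈ I :=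
  Finset.mem_union.1 (h.2.1 ▸ Finset.mem_univ v)

theorem notMem_right (h : IsSplitPartition G K I) {v : V} (hv : v ∈ K) : v ∉ I :=
  Finset.disjoint_left.1 h.1 hv

theorem mem_left_of_adj (h : IsSplitPartition G K I) {a b : V} (hab : G.Adj a b)
    (ha : a ∈ I) : b ∈ K :=
  (h.mem_or_mem b).resolve_right (h.2.2.2 a ha b · hab)

theorem edgeFinset_subset_incidenceFinset [DecidableEq V] [DecidableRel G.Adj]
    (h : IsSplitPartition G K I) {x : V} (hK : ∀ u ∈ K, u = x) :
    G.edgeFinset ⊆ G.incidenceFinset x := by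
  intro e he
  induction e using Sym2.ind with
  | _ a b =>
  have hab : G.Adj a b := SimpleGraph.mem_edgeFinset.1 he
  rw [SimpleGraph.mem_incidenceFinset, SimpleGraph.mk'_mem_incidenceSet_iff]
  refine ⟨hab, ?_⟩
  rcases h.mem_or_mem a with ha | ha
  · exact Or.inl (hK a ha).symm
  · exact Or.inr (hK b (h.mem_left_of_adj hab ha)).symm

end IsSplitPartition

namespace CliqueSperner

variable {K I : Finset V}

theorem card_le_one_of_forall_not_adj (hcs : CliqueSperner G K I)
    (hG : ∀ u v : V, ¬ G.Adj u v) : #K ≤ 1 :=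
  Finset.card_le_one.2 fun a ha b hb => hcs a ha b hb fun w hw => absurd hw.1 (hG a w)

variable [Fintype V]

theorem exists_adj_mem_right (hcs : CliqueSperner G K I) (hsp : IsSplitPartition G K I)
    (hG : G ≠ ⊥) {x : V} (hx : x ∈ K) : ∃ w ∈ I, G.Adj x w := by
  by_contra! hxI
  have hK : ∀ u ∈ K, u = x := fun u hu =>
    (hcs x hx u hu fun w hw => absurd hw.1 (hxI w hw.2)).symm
  obtain ⟨a, b, hab⟩ := SimpleGraph.ne_bot_iff_exists_adj.1 hG
  rcases hsp.mem_or_mem a with ha | ha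
  · rcases hsp.mem_or_mem b with hb | hb
    · exact G.ne_of_adj hab ((hK a ha).trans (hK b hb).symm)
    · exact hxI b hb (hK a ha ▸ hab)
  · exact hxI a ha (hK b (hsp.mem_left_of_adj hab ha) ▸ hab.symm)

theorem eq_of_indep_of_subset (hcs : CliqueSperner G K I) (hsp : IsSplitPartition G K I)
    (hG : G ≠ ⊥) {J : Finset V} (hJ : ∀ u ∈ J, ∀ v ∈ J, ¬ G.Adj u v) (hIJ : I ⊆ J) :
    J = I := by
  refine Finset.Subset.antisymm (fun x hx => ?_) hIJ
  by_contra hxI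
  obtain ⟨w, hw, hxw⟩ := hcs.exists_adj_mem_right hsp hG ((hsp.mem_or_mem x).resolve_right hxI)
  exact hJ x hx w (hIJ hw) hxw

theorem exists_eq_singleton_of_card_edgeFinset_eq_one [DecidableEq V] [DecidableRel G.Adj]
    (hcs : CliqueSperner G K I) (hsp : IsSplitPartition G K I) (h1 : #G.edgeFinset = 1) :
    ∃ v : V, K = {v} ∧ ∃ w : V, G.Adj v w := by
  have hG : G ≠ ⊥ := SimpleGraph.edgeFinset_nonempty.1 (Finset.card_pos.1 (by omega))
  obtain ⟨a, b, hab⟩ := SimpleGraph.ne_bot_iff_exists_adj.1 hG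
  obtain ⟨x, hx⟩ : ∃ x, x ∈ K := (hsp.mem_or_mem a).elim (⟨a, ·⟩) (⟨b, hsp.mem_left_of_adj hab ·⟩)
  obtain ⟨w, hw, hxw⟩ := hcs.exists_adj_mem_right hsp hG hx
  refine ⟨x, Finset.eq_singleton_iff_unique_mem.2 ⟨hx, fun u hu => ?_⟩, w, hxw⟩
  by_contra hux
  have hux_adj : G.Adj u x := hsp.2.2.1 hu hx hux
  have : s(u, x) = s(x, w) := Finset.card_le_one.1 h1.le _
    (SimpleGraph.mem_edgeFinset.2 hux_adj) _ (SimpleGraph.mem_edgeFinset.2 hxw)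
  rcases Sym2.eq_iff.1 this with ⟨h, -⟩ | ⟨rfl, -⟩
  · exact hux h
  · exact hsp.notMem_right hu hw

theorem subset_left_of_isSplitPartition [DecidableEq V] [DecidableRel G.Adj]
    (hcs : CliqueSperner G K I) (hsp : IsSplitPartition G K I) {K' I' : Finset V}
    (hsp' : IsSplitPartition G K' I') (h2 : 2 ≤ #G.edgeFinset) : K ⊆ K' := by
  intro x hx
  by_contra hxK'
  have hxI' : x ∈ I' := (hsp'.mem_or_mem x).resolve_left hxK'
  have hNx : ∀ {w}, G.Adj x w → w ∈ K' := fun hxw => hsp'.mem_left_of_adj hxw hxI'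
  have hK : ∀ u ∈ K, u = x := by
    intro u hu
    by_contra hux
    refine hux (hcs x hx u hu ?_).symm
    rintro w ⟨hxw, hw⟩
    have huw : u ≠ w := fun h => hsp.notMem_right hu (h ▸ hw)
    exact ⟨hsp'.2.2.1 (hNx (hsp.2.2.1 hu hx hux).symm) (hNx hxw) huw, hw⟩
  have hN : G.neighborFinset x ⊆ K' ∩ I := by
    intro w hw
    rw [SimpleGraph.mem_neighborFinset] at hw
    refine Finset.mem_inter.2 ⟨hNx hw, (hsp.mem_or_mem w).resolve_left fun hwK => ?_⟩
    exact G.ne_of_adj hw (hK w hwK).symm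
  have : #G.edgeFinset ≤ 1 := calc
    #G.edgeFinset ≤ #(G.incidenceFinset x) :=
      Finset.card_le_card (hsp.edgeFinset_subset_incidenceFinset hK)
    _ = #(G.neighborFinset x) := by
      rw [G.card_incidenceFinset_eq_degree, G.card_neighborFinset_eq_degree]
    _ ≤ #(K' ∩ I) := Finset.card_le_card hN
    _ ≤ 1 := card_inter_le_one_of_isClique hsp'.2.2.1 hsp.2.2.2
  omega

theorem eq_of_isSplitPartition [DecidableEq V] [DecidableRel G.Adj]
    (hcs : CliqueSperner G K I) (hsp : IsSplitPartition G K I) {K' I' : Finset V}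
    (hsp' : IsSplitPartition G K' I')
    (hI' : ∀ J : Finset V, (∀ u ∈ J, ∀ v ∈ J, ¬ G.Adj u v) → I' ⊆ J → J = I')
    (h2 : 2 ≤ #G.edgeFinset) : K' = K ∧ I' = I := by
  have hI'I : I' ⊆ I := by
    rw [← hsp'.isCompl.compl_eq, ← hsp.isCompl.compl_eq]
    exact Finset.compl_subset_compl.2 (hcs.subset_left_of_isSplitPartition hsp hsp' h2)
  have hII' : I = I' := hI' I hsp.2.2.2 hI'I
  exact ⟨hsp'.isCompl.left_unique (hII' ▸ hsp.isCompl), hII'.symm⟩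

end CliqueSperner

end SplitGraph

theorem stmt8_general {V : Type*} [Fintype V] (G : SimpleGraph V)
    [DecidableRel G.Adj] (K I : Finset V)
    (hsp : IsSplitPartition G K I) (hcs : CliqueSperner G K I) :
    ((∀ u v : V, ¬ G.Adj u v) → K.card ≤ 1) ∧
    (G.edgeFinset.card = 1 → ∃ v : V, K = {v} ∧ ∃ w : V, G.Adj v w) ∧
    (2 ≤ G.edgeFinset.card →
      (∀ J : Finset V, (∀ u ∈ J, ∀ v ∈ J, ¬ G.Adj u v) → I ⊆ J → J = I) ∧
      (∀ K' I' : Finset V, IsSplitPartition G K' I' →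
        (∀ J : Finset V, (∀ u ∈ J, ∀ v ∈ J, ¬ G.Adj u v) → I' ⊆ J → J = I') →
        K' = K ∧ I' = I)) := by
  refine ⟨hcs.card_le_one_of_forall_not_adj,
    hcs.exists_eq_singleton_of_card_edgeFinset_eq_one hsp, fun h2 => ?_⟩
  have hG : G ≠ ⊥ := SimpleGraph.edgeFinset_nonempty.1 (Finset.card_pos.1 (by omega))
  exact ⟨fun J => hcs.eq_of_indep_of_subset hsp hG,
    fun K' I' hsp' hI' => hcs.eq_of_isSplitPartition hsp hsp' hI' h2⟩

theorem stmt8 {V : Type*} [Fintype V] [DecidableEq V] (G : SimpleGraph V)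
    [DecidableRel G.Adj] (K I : Finset V)
    (hsp : IsSplitPartition G K I) (hcs : CliqueSperner G K I) :
    ((∀ u v : V, ¬ G.Adj u v) → K.card ≤ 1) ∧
    (G.edgeFinset.card = 1 → ∃ v : V, K = {v} ∧ ∃ w : V, G.Adj v w) ∧
    (2 ≤ G.edgeFinset.card →
      (∀ J : Finset V, (∀ u ∈ J, ∀ v ∈ J, ¬ G.Adj u v) → I ⊆ J → J = I) ∧
      (∀ K' I' : Finset V, IsSplitPartition G K' I' →
        (∀ J : Finset V, (∀ u ∈ J, ∀ v ∈ J, ¬ G.Adj u v) → I' ⊆ J → J = I') →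
        K' = K ∧ I' = I)) :=
  stmt8_general G K I hsp hcs
end

section
/- Let G be a finite simple split graph with at least two vertices that is H-free, and let (K, I) be a split partition of G such that the labeled split graph (G, K, I) is clique-Sperner. Then there exist a partition K = K¹ ∪ K² and a partition I = {z} ∪ I¹ ∪ I² (all parts pairwise disjoint, K¹, K², I¹, I² possibly empty) such that: z is adjacent to every vertex of K¹ and to no vertex of K²; every vertex of I¹ is adjacent to every vertex of K²; no vertex of I² is adjacent to any vertex of K¹; and the labeled split graphs (G[K¹ ∪ I¹], K¹, I¹) and (G[K² ∪ I²], K², I²) induced by K¹ ∪ I¹ and K² ∪ I², respectively, are H-free and clique-Sperner. -/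
open Finset

open scoped Classical

/-!
The traces `N(a) ∩ I`, `a ∈ K`, form a 1-Sperner hypergraph: clique-Sperner makes them pairwise
incomparable, and two of them each having two private vertices would induce `H`. In a 1-Sperner
hypergraph, if `a` is a largest and `b` a smallest hyperedge, every vertex `z ∈ b \ a` satisfies
`e \ f = {z}` for all hyperedges `e ∋ z` and `f ∌ z`. Splitting `K` by adjacency to `z`, and
`I \ {z}` by completeness to `K²`, gives the decomposition; each side stays clique-Sperner because
every vertex of `I` outside it is complete or anticomplete to its clique.
-/

theorem Finset.erase_subset_of_card_sdiff_eq_one {α : Type*} [DecidableEq α] {s t : Finset α}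
    {w : α} (h : #(s \ t) = 1) (hws : w ∈ s) (hwt : w ∉ t) : s.erase w ⊆ t := by
  intro y hy
  by_contra hyt
  exact ne_of_mem_erase hy <|
    card_le_one.1 h.le y (mem_sdiff.2 ⟨mem_of_mem_erase hy, hyt⟩) w (mem_sdiff.2 ⟨hws, hwt⟩)

namespace OneSperner

variable {α : Type*} [DecidableEq α] {E : Set (Finset α)} {e f : Finset α}

theorem sdiff_nonempty (hE : OneSperner E) (he : e ∈ E) (hf : f ∈ E) (hne : e ≠ f) :
    (e \ f).Nonempty := by
  have := hE e he f hf hne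
  rw [← Finset.card_pos]
  omega

theorem card_sdiff_eq_one_of_card_le (hE : OneSperner E) (he : e ∈ E) (hf : f ∈ E)
    (hne : e ≠ f) (hcard : #e ≤ #f) : #(e \ f) = 1 := by
  have := hE e he f hf hne
  rw [← card_sdiff_le_card_sdiff_iff] at hcard
  omega

theorem card_sdiff_eq_one_of_one_lt (hE : OneSperner E) (he : e ∈ E) (hf : f ∈ E)
    (h : 1 < #(e \ f)) : #(f \ e) = 1 := by
  have := hE e he f hf (by rintro rfl; simp at h)
  omega

theorem erase_subset_of_mem_min_sdiff_max (hE : OneSperner E) {a b : Finset α} {w : α}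
    (ha : a ∈ E) (hb : b ∈ E) (hamax : ∀ c ∈ E, #c ≤ #a) (hbmin : ∀ c ∈ E, #b ≤ #c)
    (hwb : w ∈ b) (hwa : w ∉ a) (he : e ∈ E) (hf : f ∈ E) (hwe : w ∈ e) (hwf : w ∉ f) :
    e.erase w ⊆ f := by
  have hsub {s t : Finset α} (hs : s ∈ E) (ht : t ∈ E) (hst : #s ≤ #t) (hws : w ∈ s)
      (hwt : w ∉ t) : s.erase w ⊆ t :=
    erase_subset_of_card_sdiff_eq_one
      (hE.card_sdiff_eq_one_of_card_le hs ht (by rintro rfl; exact hwt hws) hst) hws hwt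
  have hea := hsub he ha (hamax e he) hwe hwa
  have hba := hsub hb ha (hamax b hb) hwb hwa
  have hbf := hsub hb hf (hbmin f hf) hwb hwf
  -- For `x ≠ w` in `e \ f`, the vertices `w, x` force `f \ e = {v}` for the `v` in `b \ e`,
  -- whence `f ⊆ e.erase w ∪ {v} ⊆ a`, although `x ∈ a \ f`.
  intro x hx
  by_contra hxf
  have hxb : x ∉ b := fun hxb => hxf (hbf (mem_erase.2 ⟨ne_of_mem_erase hx, hxb⟩))
  obtain ⟨v, hv⟩ := hE.sdiff_nonempty hb he (by rintro rfl; exact hxb (mem_of_mem_erase hx))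
  obtain ⟨hvb, hve⟩ := mem_sdiff.1 hv
  have hvw : v ≠ w := by rintro rfl; exact hve hwe
  have hfe : f.erase v ⊆ e := by
    refine erase_subset_of_card_sdiff_eq_one (hE.card_sdiff_eq_one_of_one_lt he hf ?_)
      (hbf (mem_erase.2 ⟨hvw, hvb⟩)) hve
    exact one_lt_card.2 ⟨x, mem_sdiff.2 ⟨mem_of_mem_erase hx, hxf⟩, w,
      mem_sdiff.2 ⟨hwe, hwf⟩, ne_of_mem_erase hx⟩
  have hfa : f ⊆ a := by
    intro y hy
    by_cases hyv : y = v
    · exact hba (mem_erase.2 ⟨hyv ▸ hvw, hyv ▸ hvb⟩)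
    · exact hea (mem_erase.2 ⟨by rintro rfl; exact hwf hy, hfe (mem_erase.2 ⟨hyv, hy⟩)⟩)
  obtain ⟨y, hy⟩ := hE.sdiff_nonempty hf ha (by rintro rfl; exact hxf (hea hx))
  exact (mem_sdiff.1 hy).2 (hfa (mem_sdiff.1 hy).1)

theorem exists_mem_forall_erase_subset {F : Finset (Finset α)}
    (hF : OneSperner (F : Set (Finset α))) {S : Finset α} (hS : S.Nonempty)
    (hFS : ∀ e ∈ F, e ⊆ S) :
    ∃ z ∈ S, ∀ e ∈ F, ∀ f ∈ F, z ∈ e → z ∉ f → e.erase z ⊆ f := by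
  by_cases hF1 : #F ≤ 1
  · obtain ⟨z, hz⟩ := hS
    exact ⟨z, hz, fun e he f hf hze hzf =>
      absurd (card_le_one.1 hF1 e he f hf) (by rintro rfl; exact hzf hze)⟩
  obtain ⟨a, ha, hamax⟩ := F.exists_max_image card (card_pos.1 (by omega))
  obtain ⟨b, hb, hbmin⟩ := (F.erase a).exists_min_image card
    (card_pos.1 (by rw [card_erase_of_mem ha]; omega))
  have hbmin' : ∀ c ∈ F, #b ≤ #c := fun c hc => by
    by_cases hca : c = a
    · exact hca ▸ hamax b (mem_of_mem_erase hb)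
    · exact hbmin c (mem_erase.2 ⟨hca, hc⟩)
  obtain ⟨w, hw⟩ := hF.sdiff_nonempty (mem_of_mem_erase hb) ha (ne_of_mem_erase hb)
  exact ⟨w, hFS b (mem_of_mem_erase hb) (mem_sdiff.1 hw).1, fun e he f hf =>
    hF.erase_subset_of_mem_min_sdiff_max ha (mem_of_mem_erase hb) hamax hbmin'
      (mem_sdiff.1 hw).1 (mem_sdiff.1 hw).2 he hf⟩

end OneSperner

theorem nonempty_graphH_embedding {V : Type*} {G : SimpleGraph V} {a b x y x' y' : V}
    (hab : G.Adj a b) (hax : G.Adj a x) (hay : G.Adj a y) (hbx' : G.Adj b x')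
    (hby' : G.Adj b y') (hax' : ¬ G.Adj a x') (hay' : ¬ G.Adj a y') (hbx : ¬ G.Adj b x)
    (hby : ¬ G.Adj b y) (hxy : ¬ G.Adj x y) (hxx' : ¬ G.Adj x x') (hxy' : ¬ G.Adj x y')
    (hyx' : ¬ G.Adj y x') (hyy' : ¬ G.Adj y y') (hx'y' : ¬ G.Adj x' y')
    (hnexy : x ≠ y) (hnex'y' : x' ≠ y') :
    Nonempty (graphH ↪g G) := by
  set v : Fin 6 → V := ![x, a, y, x', b, y']
  have hinj : v.Injective := by
    intro i j hij
    fin_cases i <;> fin_cases j <;> simp [v] at hij ⊢ <;> subst hij <;> simp_all [G.adj_comm]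
  have hadj (i j : Fin 6) : G.Adj (v i) (v j) ↔ graphH.Adj i j := by
    fin_cases i <;> fin_cases j <;> simp [v, graphH, G.adj_comm, *]
  exact ⟨⟨⟨v, hinj⟩, hadj _ _⟩⟩

theorem CliqueSperner.nonempty_right {V : Type*} [Fintype V] {G : SimpleGraph V}
    {K I : Finset V} (hcs : CliqueSperner G K I)
    (hcover : K ∪ I = univ) (hcard : 1 < Fintype.card V) : I.Nonempty := by
  rw [nonempty_iff_ne_empty]
  rintro rfl
  obtain ⟨u, v, huv⟩ := Fintype.exists_pair_of_one_lt_card hcard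
  rw [union_empty] at hcover
  exact huv (hcs u (hcover ▸ mem_univ u) v (hcover ▸ mem_univ v) (by simp))

section SplitGraph

variable {V : Type*} [DecidableEq V] {G : SimpleGraph V} {K I : Finset V}

theorem CliqueSperner.sdiff_nonempty (hcs : CliqueSperner G K I) {a b : V} (ha : a ∈ K)
    (hb : b ∈ K) (hab : a ≠ b) : ({u ∈ I | G.Adj a u} \ {u ∈ I | G.Adj b u}).Nonempty := by
  by_contra h
  rw [not_nonempty_iff_eq_empty, sdiff_eq_empty_iff_subset] at h
  refine hab (hcs a ha b hb fun u ⟨hau, huI⟩ => ⟨?_, huI⟩)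
  exact (mem_filter.1 (h (mem_filter.2 ⟨huI, hau⟩))).2

theorem card_sdiff_le_one_or_of_graphH_free (hK : G.IsClique (K : Set V))
    (hI : ∀ u ∈ I, ∀ v ∈ I, ¬ G.Adj u v) (hH : ¬ Nonempty (graphH ↪g G)) {a b : V}
    (ha : a ∈ K) (hb : b ∈ K) (hab : a ≠ b) :
    #({u ∈ I | G.Adj a u} \ {u ∈ I | G.Adj b u}) ≤ 1 ∨
      #({u ∈ I | G.Adj b u} \ {u ∈ I | G.Adj a u}) ≤ 1 := by
  by_contra! h
  obtain ⟨x, hx, y, hy, hxy⟩ := one_lt_card.1 h.1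
  obtain ⟨x', hx', y', hy', hxy'⟩ := one_lt_card.1 h.2
  simp only [mem_sdiff, mem_filter, not_and] at hx hy hx' hy'
  exact hH (nonempty_graphH_embedding (hK ha hb hab) hx.1.2 hy.1.2 hx'.1.2 hy'.1.2
    (hx'.2 hx'.1.1) (hy'.2 hy'.1.1) (hx.2 hx.1.1) (hy.2 hy.1.1) (hI x hx.1.1 y hy.1.1)
    (hI x hx.1.1 x' hx'.1.1) (hI x hx.1.1 y' hy'.1.1) (hI y hy.1.1 x' hx'.1.1)
    (hI y hy.1.1 y' hy'.1.1) (hI x' hx'.1.1 y' hy'.1.1) hxy hxy')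

theorem oneSperner_image_of_graphH_free (hK : G.IsClique (K : Set V))
    (hI : ∀ u ∈ I, ∀ v ∈ I, ¬ G.Adj u v) (hcs : CliqueSperner G K I)
    (hH : ¬ Nonempty (graphH ↪g G)) :
    OneSperner ((K.image fun a => {u ∈ I | G.Adj a u} : Finset (Finset V)) : Set (Finset V)) := by
  simp only [OneSperner, coe_image, Set.forall_mem_image, mem_coe]
  intro a ha b hb hne
  have hab : a ≠ b := by rintro rfl; exact hne rfl
  have := card_pos.2 (hcs.sdiff_nonempty ha hb hab)
  have := card_pos.2 (hcs.sdiff_nonempty hb ha hab.symm)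
  have := card_sdiff_le_one_or_of_graphH_free hK hI hH ha hb hab
  omega

theorem CliqueSperner.restrict (hcs : CliqueSperner G K I) {K' I' : Finset V} (hK : K' ⊆ K)
    (hI : ∀ t ∈ I, t ∉ I' → (∀ v ∈ K', G.Adj v t) ∨ ∀ v ∈ K', ¬ G.Adj v t) :
    CliqueSperner G K' I' := by
  intro u hu v hv hsub
  refine hcs u (hK hu) v (hK hv) fun t ⟨hut, htI⟩ => ⟨?_, htI⟩
  by_cases htI' : t ∈ I'
  · exact (hsub ⟨hut, htI'⟩).1
  · rcases hI t htI htI' with hall | hnone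
    · exact hall v hv
    · exact absurd hut (hnone u hu)

end SplitGraph

theorem stmt9 {V : Type*} [Fintype V] [DecidableEq V] (G : SimpleGraph V)
    (hcard : 1 < Fintype.card V)
    (hHfree : ¬ Nonempty (graphH ↪g G))
    (K I : Finset V) (hsp : IsSplitPartition G K I) (hcs : CliqueSperner G K I) :
    ∃ (z : V) (K1 K2 I1 I2 : Finset V),
      z ∈ I ∧ z ∉ I1 ∧ z ∉ I2 ∧
      K1 ∪ K2 = K ∧ Disjoint K1 K2 ∧
      insert z (I1 ∪ I2) = I ∧ Disjoint I1 I2 ∧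
      (∀ v ∈ K1, G.Adj z v) ∧ (∀ v ∈ K2, ¬ G.Adj z v) ∧
      (∀ u ∈ I1, ∀ v ∈ K2, G.Adj u v) ∧
      (∀ u ∈ I2, ∀ v ∈ K1, ¬ G.Adj u v) ∧
      (¬ Nonempty (graphH ↪g G.induce ((K1 ∪ I1 : Finset V) : Set V))) ∧
      (¬ Nonempty (graphH ↪g G.induce ((K2 ∪ I2 : Finset V) : Set V))) ∧
      CliqueSperner G K1 I1 ∧ CliqueSperner G K2 I2 := by
  obtain ⟨-, hcover, hK, hI⟩ := hsp
  obtain ⟨z, hzI, hz⟩ :=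
    (oneSperner_image_of_graphH_free hK hI hcs hHfree).exists_mem_forall_erase_subset
      (hcs.nonempty_right hcover hcard) (by simp [filter_subset])
  set K1 := {v ∈ K | G.Adj z v}
  set K2 := {v ∈ K | ¬ G.Adj z v}
  set I1 := {u ∈ I.erase z | ∀ v ∈ K2, G.Adj u v}
  set I2 := {u ∈ I.erase z | ¬ ∀ v ∈ K2, G.Adj u v}
  have hI2K1 : ∀ u ∈ I2, ∀ v ∈ K1, ¬ G.Adj u v := by
    intro u hu v hv huv
    simp only [I2, K1, K2, mem_filter, mem_erase, not_forall, exists_prop] at hu hv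
    obtain ⟨⟨huz, huI⟩, b, ⟨hb, hzb⟩, hub⟩ := hu
    have := hz _ (mem_image_of_mem _ hv.1) _ (mem_image_of_mem _ hb)
      (mem_filter.2 ⟨hzI, hv.2.symm⟩) (by simp [hzb, G.adj_comm])
      (mem_erase.2 ⟨huz, mem_filter.2 ⟨huI, huv.symm⟩⟩)
    exact hub (mem_filter.1 this).2.symm
  have hI12 : I1 ∪ I2 = I.erase z := filter_union_filter_not_eq _ _
  have hsplit {t : V} (htI : t ∈ I) (htz : t ≠ z) : t ∈ I1 ∨ t ∈ I2 :=
    mem_union.1 (hI12 ▸ mem_erase.2 ⟨htz, htI⟩)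
  have hfree (s : Finset V) : ¬ Nonempty (graphH ↪g G.induce (s : Set V)) :=
    fun ⟨e⟩ => hHfree ⟨(SimpleGraph.Embedding.induce _).comp e⟩
  refine ⟨z, K1, K2, I1, I2, hzI, by simp [I1], by simp [I2], filter_union_filter_not_eq _ _,
    disjoint_filter_filter_not _ _ _, by rw [hI12, insert_erase hzI],
    disjoint_filter_filter_not _ _ _, fun v hv => (mem_filter.1 hv).2,
    fun v hv => (mem_filter.1 hv).2, fun u hu => (mem_filter.1 hu).2, hI2K1, hfree _, hfree _,
    hcs.restrict (filter_subset _ _) fun t htI ht => ?_,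
    hcs.restrict (filter_subset _ _) fun t htI ht => ?_⟩
  · obtain rfl | htz := eq_or_ne t z
    · exact .inl fun v hv => (mem_filter.1 hv).2.symm
    · exact .inr fun v hv hvt => hI2K1 t ((hsplit htI htz).resolve_left ht) v hv hvt.symm
  · obtain rfl | htz := eq_or_ne t z
    · exact .inr fun v hv hvt => (mem_filter.1 hv).2 hvt.symm
    · exact .inl fun v hv => ((mem_filter.1 ((hsplit htI htz).resolve_right ht)).2 v hv).symm
end

section
/- Let G be a finite simple split graph with at least two vertices that is H̄-free, and let (K, I) be a split partition of G such that the labeled split graph (G, K, I) is independent-Sperner. Then there exist a partition K = {z} ∪ K¹ ∪ K² and a partition I = I¹ ∪ I² (all parts pairwise disjoint, K¹, K², I¹, I² possibly empty) such that: z is adjacent to every vertex of I¹ and to no vertex of I²; every vertex of K¹ is adjacent to every vertex of I²; no vertex of K² is adjacent to any vertex of I¹; and the labeled split graphs (G[K¹ ∪ I¹], K¹, I¹) and (G[K² ∪ I²], K², I²) induced by K¹ ∪ I¹ and K² ∪ I², respectively, are H̄-free and independent-Sperner. -/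
open Finset

open scoped Classical

/-!
The neighbourhoods `N(u)`, `u ∈ I`, form a 1-Sperner family of subsets of `K`: the
independent-Sperner property makes them pairwise incomparable, and two private neighbours on
each side of a pair `u, v` would induce `H̄`. A 1-Sperner family with at least two members has a
pivot `z`, i.e. `z ∈ e \ f` forces `e \ f = {z}`: take for `z` the unique element of `B \ A`,
where `A` has maximum and `B` minimum size.

Split `I` by adjacency to `z`, and let `K¹` be the vertices of `K - z` complete to `I²`. By the
pivot property the remaining vertices `K²` have no neighbour in `I¹`. Hence a neighbourhood of a
vertex of `I¹` differs from its trace on `K¹ ∪ I¹` only by `z`, and one of a vertex of `I²`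
differs from its trace on `K² ∪ I²` only by vertices of `K¹`, which are common to all of `I²`;
so both halves stay independent-Sperner.
-/

open SimpleGraph

theorem Finset.mem_of_sdiff_eq_singleton {α : Type*} [DecidableEq α] {s t : Finset α} {a y : α}
    (h : s \ t = {y}) (ha : a ∈ s) (hay : a ≠ y) : a ∈ t := by
  by_contra hat
  exact hay (mem_singleton.mp (h ▸ mem_sdiff.mpr ⟨ha, hat⟩))

namespace OneSperner

variable {α : Type*} [DecidableEq α] {E : Set (Finset α)} {s t : Finset α}

theorem not_subset (hE : OneSperner E) (hs : s ∈ E) (ht : t ∈ E) (hst : s ≠ t) :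
    ¬ s ⊆ t := by
  have := hE s hs t ht hst
  rw [← sdiff_eq_empty_iff_subset, ← card_eq_zero]
  omega

theorem card_sdiff_eq_one_of_card_le_s10 (hE : OneSperner E) (hs : s ∈ E) (ht : t ∈ E)
    (hst : s ≠ t) (hcard : #s ≤ #t) : #(s \ t) = 1 := by
  have := hE s hs t ht hst
  have := card_sdiff_le_card_sdiff_iff.mpr hcard
  omega

theorem card_sdiff_eq_one_of_one_lt_s10 (hE : OneSperner E) (hs : s ∈ E) (ht : t ∈ E)
    (h : 1 < #(s \ t)) : #(t \ s) = 1 := by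
  have hst : s ≠ t := by rintro rfl; simp at h
  have := hE s hs t ht hst
  omega

theorem sdiff_eq_singleton_of_card_le (hE : OneSperner E) (hs : s ∈ E) (ht : t ∈ E)
    (hcard : #s ≤ #t) {y : α} (hy : y ∈ s \ t) : s \ t = {y} := by
  have hst : s ≠ t := by rintro rfl; simp at hy
  obtain ⟨a, ha⟩ := card_eq_one.mp (hE.card_sdiff_eq_one_of_card_le_s10 hs ht hst hcard)
  rw [ha] at hy ⊢
  rw [mem_singleton.mp hy]

/-- Members through `y` lie in `insert y A` and members avoiding `y` contain `B.erase y`;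
a second element of `s \ t` would then force `B ⊆ s`. -/
theorem sdiff_eq_singleton_of_extremal (hE : OneSperner E) {A B : Finset α} {y : α}
    (hA : A ∈ E) (hAmax : ∀ t ∈ E, #t ≤ #A) (hB : B ∈ E) (hBmin : ∀ t ∈ E, #B ≤ #t)
    (hy : B \ A = {y}) (hs : s ∈ E) (ht : t ∈ E) (hys : y ∈ s) (hyt : y ∉ t) :
    s \ t = {y} := by
  obtain ⟨hyB, hyA⟩ := mem_sdiff.mp (hy ▸ mem_singleton_self y)
  have hsA : s \ A = {y} :=
    hE.sdiff_eq_singleton_of_card_le hs hA (hAmax s hs) (mem_sdiff.mpr ⟨hys, hyA⟩)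
  have hBt : B \ t = {y} :=
    hE.sdiff_eq_singleton_of_card_le hB ht (hBmin t ht) (mem_sdiff.mpr ⟨hyB, hyt⟩)
  by_contra hne
  obtain ⟨w, hw, hwy⟩ : ∃ w ∈ s \ t, w ≠ y := by
    by_contra! h
    exact hne (eq_singleton_iff_unique_mem.mpr ⟨mem_sdiff.mpr ⟨hys, hyt⟩, h⟩)
  have hts : #(t \ s) = 1 := hE.card_sdiff_eq_one_of_one_lt_s10 hs ht
    (one_lt_card.mpr ⟨y, mem_sdiff.mpr ⟨hys, hyt⟩, w, hw, hwy.symm⟩)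
  have hwA : w ∈ A := mem_of_sdiff_eq_singleton hsA (mem_sdiff.mp hw).1 hwy
  have htA : t ≠ A := by rintro rfl; exact (mem_sdiff.mp hw).2 hwA
  obtain ⟨x, hx⟩ := card_eq_one.mp (hE.card_sdiff_eq_one_of_card_le_s10 ht hA htA (hAmax t ht))
  obtain ⟨hxt, hxA⟩ := mem_sdiff.mp (hx ▸ mem_singleton_self x)
  have hxs : x ∉ s := fun hxs ↦
    hxA (mem_of_sdiff_eq_singleton hsA hxs (by rintro rfl; exact hyt hxt))
  have hBs : B ⊆ s := by
    intro b hb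
    by_contra hbs
    have hbt : b ∈ t := mem_of_sdiff_eq_singleton hBt hb (by rintro rfl; exact hbs hys)
    have hbA : b ∈ A := mem_of_sdiff_eq_singleton hy hb (by rintro rfl; exact hyt hbt)
    have hbx : b = x :=
      card_le_one.mp hts.le b (mem_sdiff.mpr ⟨hbt, hbs⟩) x (mem_sdiff.mpr ⟨hxt, hxs⟩)
    exact hxA (hbx ▸ hbA)
  obtain rfl : B = s := by
    by_contra h
    exact hE.not_subset hB hs h hBs
  exact hwy (mem_singleton.mp (hBt ▸ hw))

theorem exists_pivot {E : Finset (Finset α)} (hE : OneSperner (E : Set (Finset α)))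
    (hE2 : E.Nontrivial) :
    ∃ B ∈ E, ∃ y ∈ B, ∀ s ∈ E, ∀ t ∈ E, y ∈ s → y ∉ t → s \ t = {y} := by
  obtain ⟨A, hA, hAmax⟩ := E.exists_max_image card hE2.nonempty
  obtain ⟨B, hB', hBmin⟩ := (E.erase A).exists_min_image card hE2.erase_nonempty
  obtain ⟨hBA, hB⟩ := mem_erase.mp hB'
  have hBmin' : ∀ t ∈ E, #B ≤ #t := fun t ht ↦ by
    rcases eq_or_ne t A with rfl | htA
    · exact hAmax B hB
    · exact hBmin t (mem_erase.mpr ⟨htA, ht⟩)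
  obtain ⟨y, hy⟩ := card_eq_one.mp (hE.card_sdiff_eq_one_of_card_le_s10 hB hA hBA (hAmax B hB))
  exact ⟨B, hB, y, (mem_sdiff.mp (hy ▸ mem_singleton_self y)).1, fun s hs t ht ↦
    hE.sdiff_eq_singleton_of_extremal hA hAmax hB hBmin' hy hs ht⟩

end OneSperner

theorem compl_graphH_isIndContained {V : Type*} {G : SimpleGraph V} {u v x y x' y' : V}
    (hux : G.Adj u x) (huy : G.Adj u y) (hvx' : G.Adj v x') (hvy' : G.Adj v y')
    (hxy : G.Adj x y) (hx'y' : G.Adj x' y') (hxx' : G.Adj x x') (hxy' : G.Adj x y')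
    (hyx' : G.Adj y x') (hyy' : G.Adj y y')
    (huv : ¬ G.Adj u v) (hux' : ¬ G.Adj u x') (huy' : ¬ G.Adj u y')
    (hvx : ¬ G.Adj v x) (hvy : ¬ G.Adj v y) :
    graphHᶜ ⊴ G := by
  have hinj : Function.Injective ![x', u, y', x, v, y] := by
    intro a b h
    fin_cases a <;> fin_cases b <;> simp at h ⊢ <;> subst h <;> simp_all [G.adj_comm]
  refine ⟨⟨⟨![x', u, y', x, v, y], hinj⟩, ?_⟩⟩
  intro a b
  fin_cases a <;> fin_cases b <;> simp [graphH, *, G.adj_comm]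

theorem not_isIndContained_induce {V W : Type*} {G : SimpleGraph V} {H : SimpleGraph W}
    (h : ¬ H ⊴ G) (s : Set V) : ¬ H ⊴ G.induce s :=
  fun h' ↦ h (h'.trans ⟨Embedding.induce s⟩)

theorem IndependentSperner.eq_of_inter_subset {V : Type*} {G : SimpleGraph V} {K I J : Finset V}
    {S : Set V} (his : IndependentSperner G K I) (hJ : J ⊆ I)
    (hout : ∀ u ∈ J, ∀ v ∈ J, G.neighborSet u \ S ⊆ G.neighborSet v) :
    ∀ u ∈ J, ∀ v ∈ J, G.neighborSet u ∩ S ⊆ G.neighborSet v ∩ S → u = v :=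
  fun u hu v hv h ↦ his u (hJ hu) v (hJ hv) fun w hw ↦ by
    by_cases hwS : w ∈ S
    · exact (h ⟨hw, hwS⟩).1
    · exact hout u hu v hv ⟨hw, hwS⟩

theorem IndependentSperner.eq_of_neighborFinset_subset {V : Type*} [Fintype V]
    {G : SimpleGraph V} {K I : Finset V} (his : IndependentSperner G K I) {u v : V}
    (hu : u ∈ I) (hv : v ∈ I) (h : G.neighborFinset u ⊆ G.neighborFinset v) : u = v :=
  his u hu v hv fun w hw ↦ by simpa using h (by simpa using hw)

namespace IsSplitPartition

variable {V : Type*} [Fintype V] {G : SimpleGraph V} {K I : Finset V} {u v w : V}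

theorem mem_of_adj (hsp : IsSplitPartition G K I) (hu : u ∈ I) (huw : G.Adj u w) : w ∈ K := by
  have hw : w ∈ K ∪ I := hsp.2.1 ▸ mem_univ w
  exact (mem_union.mp hw).resolve_right fun hwI ↦ hsp.2.2.2 u hu w hwI huw

theorem neighborFinset_subset (hsp : IsSplitPartition G K I) (hu : u ∈ I) :
    G.neighborFinset u ⊆ K := fun _ hw ↦ hsp.mem_of_adj hu ((G.mem_neighborFinset _ _).mp hw)

/-- Two private neighbours on each side, all in the clique `K`, induce `H̄` together with
`u` and `v`. -/
theorem card_sdiff_neighborFinset_le_one (hsp : IsSplitPartition G K I)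
    (hfree : ¬ graphHᶜ ⊴ G) (hu : u ∈ I) (hv : v ∈ I) :
    #(G.neighborFinset u \ G.neighborFinset v) ≤ 1 ∨
      #(G.neighborFinset v \ G.neighborFinset u) ≤ 1 := by
  by_contra! h
  obtain ⟨x, hx, y, hy, hxy⟩ := one_lt_card.mp h.1
  obtain ⟨x', hx', y', hy', hxy'⟩ := one_lt_card.mp h.2
  simp only [mem_sdiff, mem_neighborFinset] at hx hy hx' hy'
  have hK : ∀ {a b}, G.Adj u a ∨ G.Adj v a → G.Adj u b ∨ G.Adj v b → a ≠ b →
      G.Adj a b :=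
    fun ha hb hab ↦ hsp.2.2.1
      (ha.elim (hsp.mem_of_adj hu) (hsp.mem_of_adj hv))
      (hb.elim (hsp.mem_of_adj hu) (hsp.mem_of_adj hv)) hab
  refine hfree (compl_graphH_isIndContained hx.1 hy.1 hx'.1 hy'.1 (hK (.inl hx.1) (.inl hy.1) hxy)
    (hK (.inr hx'.1) (.inr hy'.1) hxy') ?_ ?_ ?_ ?_ (hsp.2.2.2 u hu v hv) hx'.2 hy'.2 hx.2 hy.2)
  all_goals refine hK (by tauto) (by tauto) ?_; rintro rfl; tauto

theorem oneSperner_image_neighborFinset (hsp : IsSplitPartition G K I)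
    (his : IndependentSperner G K I) (hfree : ¬ graphHᶜ ⊴ G) :
    OneSperner ((I.image fun u ↦ G.neighborFinset u : Finset (Finset V)) : Set (Finset V)) := by
  rintro _ hs _ ht hne
  obtain ⟨u, hu, rfl⟩ := mem_image.mp (mem_coe.mp hs)
  obtain ⟨v, hv, rfl⟩ := mem_image.mp (mem_coe.mp ht)
  have hsperner : ∀ {a b}, a ∈ I → b ∈ I → a ≠ b →
      0 < #(G.neighborFinset a \ G.neighborFinset b) := fun ha hb hab ↦
    card_pos.mpr (sdiff_nonempty.mpr fun hsub ↦ hab (his.eq_of_neighborFinset_subset ha hb hsub))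
  have huv : u ≠ v := by rintro rfl; exact hne rfl
  have := hsperner hu hv huv
  have := hsperner hv hu huv.symm
  have := hsp.card_sdiff_neighborFinset_le_one hfree hu hv
  omega

theorem exists_pivot (hsp : IsSplitPartition G K I) (his : IndependentSperner G K I)
    (hfree : ¬ graphHᶜ ⊴ G) (hcard : 1 < Fintype.card V) :
    ∃ z ∈ K, ∀ u ∈ I, ∀ v ∈ I, G.Adj z u → ¬ G.Adj z v →
      ∀ w ≠ z, G.Adj u w → G.Adj v w := by
  by_cases hI : I.Nontrivial
  · have hE : (I.image fun u ↦ G.neighborFinset u).Nontrivial :=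
      hI.image_of_injOn fun a ha b hb hab ↦ his.eq_of_neighborFinset_subset ha hb hab.le
    obtain ⟨_, hB, z, hz, hpivot⟩ :=
      (hsp.oneSperner_image_neighborFinset his hfree).exists_pivot hE
    obtain ⟨b, hb, rfl⟩ := mem_image.mp hB
    refine ⟨z, hsp.neighborFinset_subset hb hz, fun u hu v hv hzu hzv w hwz huw ↦ ?_⟩
    have hsdiff := hpivot _ (mem_image_of_mem _ hu) _ (mem_image_of_mem _ hv)
      ((G.mem_neighborFinset _ _).mpr hzu.symm) (by simpa [G.adj_comm] using hzv)
    simpa using mem_of_sdiff_eq_singleton hsdiff ((G.mem_neighborFinset _ _).mpr huw) hwz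
  · obtain ⟨z, hz⟩ : K.Nonempty := by
      by_contra hK
      have hIuniv : I = univ := by
        rw [← hsp.2.1, not_nonempty_iff_eq_empty.mp hK, empty_union]
      exact hI (hIuniv ▸ one_lt_card_iff_nontrivial.mp hcard)
    refine ⟨z, hz, fun u hu v hv hzu hzv ↦ ?_⟩
    obtain rfl : u = v := Set.not_nontrivial_iff.mp hI hu hv
    exact absurd hzu hzv

end IsSplitPartition

theorem stmt10 {V : Type*} [Fintype V] [DecidableEq V] (G : SimpleGraph V)
    (hcard : 1 < Fintype.card V)
    (hHbarfree : ¬ Nonempty (graphHᶜ ↪g G))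
    (K I : Finset V) (hsp : IsSplitPartition G K I)
    (his : IndependentSperner G K I) :
    ∃ (z : V) (K1 K2 I1 I2 : Finset V),
      z ∈ K ∧ z ∉ K1 ∧ z ∉ K2 ∧
      insert z (K1 ∪ K2) = K ∧ Disjoint K1 K2 ∧
      I1 ∪ I2 = I ∧ Disjoint I1 I2 ∧
      (∀ v ∈ I1, G.Adj z v) ∧ (∀ v ∈ I2, ¬ G.Adj z v) ∧
      (∀ u ∈ K1, ∀ v ∈ I2, G.Adj u v) ∧
      (∀ u ∈ K2, ∀ v ∈ I1, ¬ G.Adj u v) ∧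
      (¬ Nonempty (graphHᶜ ↪g G.induce ((K1 ∪ I1 : Finset V) : Set V))) ∧
      (¬ Nonempty (graphHᶜ ↪g G.induce ((K2 ∪ I2 : Finset V) : Set V))) ∧
      (∀ u ∈ I1, ∀ v ∈ I1,
        G.neighborSet u ∩ ((K1 ∪ I1 : Finset V) : Set V) ⊆
          G.neighborSet v ∩ ((K1 ∪ I1 : Finset V) : Set V) → u = v) ∧
      (∀ u ∈ I2, ∀ v ∈ I2,
        G.neighborSet u ∩ ((K2 ∪ I2 : Finset V) : Set V) ⊆
          G.neighborSet v ∩ ((K2 ∪ I2 : Finset V) : Set V) → u = v) := by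
  obtain ⟨z, hzK, hpivot⟩ := hsp.exists_pivot his hHbarfree hcard
  set I1 := I.filter (G.Adj z)
  set I2 := I.filter (¬ G.Adj z ·)
  set K1 := (K.erase z).filter fun w ↦ ∀ v ∈ I2, G.Adj w v
  set K2 := (K.erase z).filter fun w ↦ ¬ ∀ v ∈ I2, G.Adj w v
  -- the pivot property: a neighbour `u ≠ z` of some vertex of `I1` is complete to `I2`
  have hK2I1 : ∀ u ∈ K2, ∀ v ∈ I1, ¬ G.Adj u v := by
    intro u hu v hv huv
    simp only [K2, I1, I2, mem_filter, mem_erase, not_forall] at hu hv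
    obtain ⟨⟨huz, -⟩, v', ⟨hv'I, hzv'⟩, huv'⟩ := hu
    exact huv' (hpivot v hv.1 v' hv'I hv.2 hzv' u huz huv.symm).symm
  have hK : ∀ w ∈ K, w ≠ z → w ∈ K1 ∨ w ∈ K2 := fun w hw hwz ↦ by
    simp only [K1, K2, mem_filter, mem_erase]
    tauto
  refine ⟨z, K1, K2, I1, I2, hzK, by simp [K1], by simp [K2], ?_,
    disjoint_filter_filter_not _ _ _, filter_union_filter_not_eq _ _,
    disjoint_filter_filter_not _ _ _, fun v hv ↦ (mem_filter.mp hv).2,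
    fun v hv ↦ (mem_filter.mp hv).2, fun u hu ↦ (mem_filter.mp hu).2, hK2I1,
    not_isIndContained_induce hHbarfree _, not_isIndContained_induce hHbarfree _,
    his.eq_of_inter_subset (filter_subset _ _) ?_, his.eq_of_inter_subset (filter_subset _ _) ?_⟩
  · rw [filter_union_filter_not_eq, insert_erase hzK]
  · rintro u hu v hv w ⟨huw, hw⟩
    obtain rfl | hwz := eq_or_ne w z
    · exact (mem_filter.mp hv).2.symm
    rcases hK w (hsp.mem_of_adj (mem_filter.mp hu).1 huw) hwz with hwK | hwK
    · exact absurd (mem_coe.mpr (mem_union_left _ hwK)) hw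
    · exact absurd huw.symm (hK2I1 w hwK u hu)
  · rintro u hu v hv w ⟨huw, hw⟩
    obtain rfl | hwz := eq_or_ne w z
    · exact absurd huw.symm (mem_filter.mp hu).2
    rcases hK w (hsp.mem_of_adj (mem_filter.mp hu).1 huw) hwz with hwK | hwK
    · exact ((mem_filter.mp hwK).2 v hv).symm
    · exact absurd (mem_coe.mpr (mem_union_left _ hwK)) hw
end
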